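/- arXiv:math/0505417 — 6 statements merged into one kernel-verified Lean document; each statement's English description precedes it below -/
import Mathlib

section
/- Let α be an irrational real with continued fraction convergents p_n/q_n and partial quotients a_n. Then μ(α) = 1 + limsup_{n→∞} (ln q_{n+1})/(ln q_n) = 2 + limsup_{n→∞} (ln a_{n+1})/(ln q_n). -/
open scoped ENNReal

/-- The irrationality exponent of a real number `α`:
the supremum of exponents `ν` such that `|α - p/q| < 1/q^ν` has infinitely many
integer solutions `(p, q)` with `q ≥ 1`. -/
noncomputable def irrExp (α : ℝ) : ℝ≥0∞ :=
  sSup {m : ℝ≥0∞ | ∃ ν : ℝ, m = ENNReal.ofReal ν ∧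
    {pq : ℤ × ℤ | 1 ≤ pq.2 ∧ |α - (pq.1 : ℝ) / (pq.2 : ℝ)| < 1 / (pq.2 : ℝ) ^ ν}.Infinite}

open Filter Topology

/-!
Since `p_{n+1} q_n - p_n q_{n+1} = (-1)^n`, the even convergents increase and the odd ones decrease
to `α`, so `1 / (2 q_n q_{n+1}) ≤ |α - p_n / q_n| < 1 / (q_n q_{n+1})`.
Hence `p_n / q_n` is an approximation of order `ν` as soon as `q_n ^ (ν - 1) ≤ q_{n+1}`, which gives
the lower bound. Conversely, by the best approximation property, a solution `P / Q` with
`q_n ≤ Q < q_{n+1}` approximates no better than `p_n / q_n`, which forces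
`Q ^ (ν - 1) < 2 q_{n+1}`, and this gives the upper bound. Finally
`a_{n+1} q_n ≤ q_{n+1} ≤ 2 a_{n+1} q_n`, so the two limsups differ by exactly `1`.
-/

theorem sSup_ofReal_setOf_eq {P : ℝ → Prop} {M : ℝ≥0∞}
    (hlt : ∀ ν, ENNReal.ofReal ν < M → P ν) (hle : ∀ ν, P ν → ENNReal.ofReal ν ≤ M) :
    sSup {m | ∃ ν : ℝ, m = ENNReal.ofReal ν ∧ P ν} = M := by
  refine le_antisymm (sSup_le ?_) (le_of_forall_lt fun d hd => ?_)
  · rintro _ ⟨ν, rfl, hν⟩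
    exact hle ν hν
  · obtain ⟨d', hdd', hd'M⟩ := exists_between hd
    have hd' : ENNReal.ofReal d'.toReal = d' := ENNReal.ofReal_toReal hd'M.ne_top
    exact hdd'.trans_le (le_sSup ⟨d'.toReal, hd'.symm, hlt _ (hd'.symm ▸ hd'M)⟩)

theorem limsup_ofReal_add_le {ι : Type*} {f : Filter ι} {u w : ι → ℝ}
    (hw : Tendsto w f (𝓝 0)) :
    limsup (fun i => ENNReal.ofReal (u i + w i)) f ≤ limsup (fun i => ENNReal.ofReal (u i)) f := by
  have hw' : Tendsto (fun i => ENNReal.ofReal (w i)) f (𝓝 0) := by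
    simpa using ENNReal.tendsto_ofReal hw
  calc limsup (fun i => ENNReal.ofReal (u i + w i)) f
      ≤ limsup ((fun i => ENNReal.ofReal (u i)) + fun i => ENNReal.ofReal (w i)) f :=
        limsup_le_limsup (.of_forall fun _ => ENNReal.ofReal_add_le)
    _ = limsup (fun i => ENNReal.ofReal (u i)) f := ENNReal.limsup_add_of_right_tendsto_zero hw' _

theorem limsup_ofReal_add_of_tendsto_zero {ι : Type*} {f : Filter ι} {u w : ι → ℝ}
    (hw : Tendsto w f (𝓝 0)) :
    limsup (fun i => ENNReal.ofReal (u i + w i)) f = limsup (fun i => ENNReal.ofReal (u i)) f := by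
  refine le_antisymm (limsup_ofReal_add_le hw) ?_
  simpa using limsup_ofReal_add_le (u := fun i => u i + w i) (w := fun i => -w i)
    (by simpa using hw.neg)

theorem neg_one_pow_sq {R : Type*} [Monoid R] [HasDistribNeg R] (n : ℕ) :
    ((-1 : R) ^ n) ^ 2 = 1 := by
  rw [← pow_mul, pow_mul', neg_one_sq, one_pow]

theorem abs_eq_neg_one_pow_mul {x : ℝ} {n : ℕ} (hx : 0 < (-1) ^ n * x) : |x| = (-1) ^ n * x := by
  rw [← abs_of_pos hx, abs_mul, abs_neg_one_pow, one_mul]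

theorem abs_le_abs_add_of_mul_nonneg {u v : ℝ} (h : 0 ≤ u * v) : |u| ≤ |u + v| :=
  sq_le_sq.mp (by nlinarith [sq_nonneg v])

theorem le_log_div_add_log_two_div_of_rpow_lt {x Q y c : ℝ} (hx : 1 < x) (hxQ : x ≤ Q)
    (hc : 0 ≤ c) (h : Q ^ c < 2 * y) : c ≤ Real.log y / Real.log x + Real.log 2 / Real.log x := by
  have hQ : 0 < Q := by linarith
  have hy : 0 < y := by linarith [Real.rpow_pos_of_pos hQ c]
  have hlog : c * Real.log Q < Real.log 2 + Real.log y := by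
    rw [← Real.log_rpow hQ, ← Real.log_mul two_ne_zero hy.ne']
    exact Real.log_lt_log (Real.rpow_pos_of_pos hQ c) h
  have hxQ' : c * Real.log x ≤ c * Real.log Q := by gcongr
  rw [← add_div, le_div_iff₀ (Real.log_pos hx)]
  linarith

def approxSet (α ν : ℝ) : Set (ℤ × ℤ) :=
  {pq : ℤ × ℤ | 1 ≤ pq.2 ∧ |α - (pq.1 : ℝ) / (pq.2 : ℝ)| < 1 / (pq.2 : ℝ) ^ ν}

theorem irrExp_eq_sSup_approxSet (α : ℝ) :
    irrExp α = sSup {m | ∃ ν : ℝ, m = ENNReal.ofReal ν ∧ (approxSet α ν).Infinite} :=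
  rfl

theorem exists_mem_approxSet_lt {α ν : ℝ} (hν : 0 ≤ ν) (h : (approxSet α ν).Infinite) (B : ℤ) :
    ∃ pq ∈ approxSet α ν, B < pq.2 := by
  by_contra! hB
  set M : ℤ := ⌈B * (|α| + 1)⌉
  refine h (((Set.finite_Icc (-M) M).prod (Set.finite_Icc 1 B)).subset ?_)
  rintro ⟨P, Q⟩ hPQ
  have hQB : Q ≤ B := hB _ hPQ
  obtain ⟨hQ, hlt⟩ := hPQ
  have hQR : (1 : ℝ) ≤ Q := by exact_mod_cast hQ
  have hPQ : |(P : ℝ) / Q| ≤ |α| + 1 := by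
    have : 1 / (Q : ℝ) ^ ν ≤ 1 := div_le_one_of_le₀ (Real.one_le_rpow hQR hν) (by positivity)
    linarith [abs_sub_abs_le_abs_sub ((P : ℝ) / Q) α, abs_sub_comm ((P : ℝ) / Q) α]
  have hPM : |(P : ℝ)| ≤ M :=
    calc |(P : ℝ)| = Q * |(P : ℝ) / Q| := by
          rw [abs_div, abs_of_pos (by linarith : (0 : ℝ) < Q)]; field_simp
      _ ≤ B * (|α| + 1) := by
          have hQBR : (Q : ℝ) ≤ B := by exact_mod_cast hQB
          exact mul_le_mul hQBR hPQ (abs_nonneg _) (by linarith)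
      _ ≤ M := Int.le_ceil _
  exact ⟨abs_le.mp (by exact_mod_cast hPM), hQ, hQB⟩

structure IsContFractConvergents (a p q : ℕ → ℤ) : Prop where
  one_le_a : ∀ n, 1 ≤ n → 1 ≤ a n
  p_zero : p 0 = a 0
  p_one : p 1 = a 1 * a 0 + 1
  q_zero : q 0 = 1
  q_one : q 1 = a 1
  p_add_two : ∀ n, p (n + 2) = a (n + 2) * p (n + 1) + p n
  q_add_two : ∀ n, q (n + 2) = a (n + 2) * q (n + 1) + q n

namespace IsContFractConvergents

variable {a p q : ℕ → ℤ}

theorem one_le_q (h : IsContFractConvergents a p q) (n : ℕ) : 1 ≤ q n := by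
  suffices ∀ n, 1 ≤ q n ∧ 1 ≤ q (n + 1) from (this n).1
  intro n
  induction n with
  | zero => exact ⟨h.q_zero.ge, h.q_one ▸ h.one_le_a 1 le_rfl⟩
  | succ n ih =>
    refine ⟨ih.2, ?_⟩
    rw [h.q_add_two]
    nlinarith [h.one_le_a (n + 2) (by omega)]

theorem q_succ_lt_q_add_two (h : IsContFractConvergents a p q) (n : ℕ) : q (n + 1) < q (n + 2) := by
  rw [h.q_add_two]
  nlinarith [h.one_le_a (n + 2) (by omega), h.one_le_q n, h.one_le_q (n + 1)]

theorem monotone_q (h : IsContFractConvergents a p q) : Monotone q := by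
  refine monotone_nat_of_le_succ fun n => ?_
  cases n with
  | zero => rw [h.q_zero, h.q_one]; exact h.one_le_a 1 le_rfl
  | succ n => exact (h.q_succ_lt_q_add_two n).le

theorem strictMonoOn_q (h : IsContFractConvergents a p q) : StrictMonoOn q (Set.Ici 1) := by
  intro i hi j _ hij
  obtain ⟨m, rfl⟩ : ∃ m, i = m + 1 := ⟨i - 1, by simp at hi; omega⟩
  exact (h.q_succ_lt_q_add_two m).trans_le (h.monotone_q (by omega))

theorem natCast_le_q (h : IsContFractConvergents a p q) (n : ℕ) : (n : ℤ) ≤ q n := by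
  induction n with
  | zero => simpa using (zero_lt_one.trans_le (h.one_le_q 0)).le
  | succ n ih =>
    cases n with
    | zero => simpa using h.one_le_q 1
    | succ n => push_cast at ih ⊢; linarith [h.q_succ_lt_q_add_two n]

theorem tendsto_log_q (h : IsContFractConvergents a p q) :
    Tendsto (fun n => Real.log (q n)) atTop atTop :=
  Real.tendsto_log_atTop.comp <| tendsto_atTop_mono (fun n => by exact_mod_cast h.natCast_le_q n)
    tendsto_natCast_atTop_atTop

theorem log_q_pos (h : IsContFractConvergents a p q) {n : ℕ} (hn : 2 ≤ n) : 0 < Real.log (q n) :=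
  Real.log_pos (by exact_mod_cast (h.natCast_le_q n).trans_lt' (by omega))

theorem a_mul_q_le_q_succ (h : IsContFractConvergents a p q) {n : ℕ} (hn : 1 ≤ n) :
    a (n + 1) * q n ≤ q (n + 1) := by
  obtain ⟨m, rfl⟩ : ∃ m, n = m + 1 := ⟨n - 1, by omega⟩
  linarith [h.q_add_two m, h.one_le_q m]

theorem q_succ_le_two_mul_a_mul_q (h : IsContFractConvergents a p q) {n : ℕ} (hn : 1 ≤ n) :
    q (n + 1) ≤ 2 * (a (n + 1) * q n) := by
  obtain ⟨m, rfl⟩ : ∃ m, n = m + 1 := ⟨n - 1, by omega⟩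
  nlinarith [h.q_add_two m, h.monotone_q m.le_succ, h.one_le_a (m + 2) (by omega), h.one_le_q m]

theorem log_q_succ_sub_mem_Icc (h : IsContFractConvergents a p q) {n : ℕ} (hn : 1 ≤ n) :
    Real.log (q (n + 1)) - Real.log (a (n + 1)) - Real.log (q n) ∈ Set.Icc 0 (Real.log 2) := by
  have ha : (0 : ℝ) < a (n + 1) := by exact_mod_cast zero_lt_one.trans_le (h.one_le_a _ (by omega))
  have hq : (0 : ℝ) < q n := by exact_mod_cast zero_lt_one.trans_le (h.one_le_q n)
  have hlow : (a (n + 1) * q n : ℝ) ≤ q (n + 1) := by exact_mod_cast h.a_mul_q_le_q_succ hn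
  have hhigh : (q (n + 1) : ℝ) ≤ 2 * (a (n + 1) * q n) := by
    exact_mod_cast h.q_succ_le_two_mul_a_mul_q hn
  have hlog_low := Real.log_le_log (mul_pos ha hq) hlow
  have hlog_high := Real.log_le_log (mul_pos ha hq |>.trans_le hlow) hhigh
  rw [Real.log_mul ha.ne' hq.ne'] at hlog_low
  rw [Real.log_mul two_ne_zero (mul_pos ha hq).ne', Real.log_mul ha.ne' hq.ne'] at hlog_high
  constructor <;> linarith

theorem limsup_log_q_succ_div_eq (h : IsContFractConvergents a p q) :
    limsup (fun n => ENNReal.ofReal (Real.log (q (n + 1)) / Real.log (q n))) atTop =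
      1 + limsup (fun n => ENNReal.ofReal (Real.log (a (n + 1)) / Real.log (q n))) atTop := by
  set θ : ℕ → ℝ := fun n => Real.log (q (n + 1)) - Real.log (a (n + 1)) - Real.log (q n)
  have hsplit : ∀ᶠ n in atTop, Real.log (q (n + 1)) / Real.log (q n) =
      (1 + Real.log (a (n + 1)) / Real.log (q n)) + θ n / Real.log (q n) := by
    filter_upwards [eventually_ge_atTop 2] with n hn
    have := (h.log_q_pos hn).ne'
    field_simp
    ring
  have hθ : Tendsto (fun n => θ n / Real.log (q n)) atTop (𝓝 0) := by
    have hbounds : ∀ᶠ n in atTop,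
        0 ≤ θ n / Real.log (q n) ∧ θ n / Real.log (q n) ≤ Real.log 2 / Real.log (q n) := by
      filter_upwards [eventually_ge_atTop 2] with n hn
      have hmem := h.log_q_succ_sub_mem_Icc (n := n) (by omega)
      have hpos := h.log_q_pos hn
      exact ⟨div_nonneg hmem.1 hpos.le, div_le_div_of_nonneg_right hmem.2 hpos.le⟩
    exact tendsto_of_tendsto_of_tendsto_of_le_of_le' tendsto_const_nhds
      ((tendsto_const_nhds (x := Real.log 2)).div_atTop h.tendsto_log_q)
      (hbounds.mono fun _ hn => hn.1) (hbounds.mono fun _ hn => hn.2)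
  have hs : ∀ n, 0 ≤ Real.log (a (n + 1)) / Real.log (q n) := fun n =>
    div_nonneg (Real.log_nonneg (by exact_mod_cast h.one_le_a (n + 1) (by omega)))
      (Real.log_nonneg (by exact_mod_cast h.one_le_q n))
  calc limsup (fun n => ENNReal.ofReal (Real.log (q (n + 1)) / Real.log (q n))) atTop
      = limsup (fun n => ENNReal.ofReal
          ((1 + Real.log (a (n + 1)) / Real.log (q n)) + θ n / Real.log (q n))) atTop :=
        limsup_congr (hsplit.mono fun n hn => by rw [hn])
    _ = limsup (fun n => 1 + ENNReal.ofReal (Real.log (a (n + 1)) / Real.log (q n))) atTop := by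
        rw [limsup_ofReal_add_of_tendsto_zero hθ]
        simp only [ENNReal.ofReal_add zero_le_one (hs _), ENNReal.ofReal_one]
    _ = 1 + limsup (fun n => ENNReal.ofReal (Real.log (a (n + 1)) / Real.log (q n))) atTop :=
        limsup_const_add _ _ _ (by isBoundedDefault) (by isBoundedDefault)

theorem det (h : IsContFractConvergents a p q) (n : ℕ) :
    p (n + 1) * q n - p n * q (n + 1) = (-1) ^ n := by
  induction n with
  | zero => rw [h.p_zero, h.p_one, h.q_zero, h.q_one]; ring
  | succ n ih => rw [h.p_add_two, h.q_add_two, pow_succ]; linear_combination -ih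

theorem det_add_two (h : IsContFractConvergents a p q) (n : ℕ) :
    p (n + 2) * q n - p n * q (n + 2) = (-1) ^ n * a (n + 2) := by
  rw [h.p_add_two, h.q_add_two]
  linear_combination a (n + 2) * h.det n

theorem neg_one_pow_mul_convergent_succ_sub (h : IsContFractConvergents a p q) (n : ℕ) :
    (-1) ^ n * ((p (n + 1) : ℝ) / q (n + 1) - p n / q n) = 1 / (q n * q (n + 1)) := by
  have hdet : ((p (n + 1) * q n - p n * q (n + 1) : ℤ) : ℝ) = (-1) ^ n := by exact_mod_cast h.det n
  have := h.one_le_q n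
  have := h.one_le_q (n + 1)
  push_cast at hdet
  calc (-1) ^ n * ((p (n + 1) : ℝ) / q (n + 1) - p n / q n)
      = (-1) ^ n * (p (n + 1) * q n - p n * q (n + 1)) / (q n * q (n + 1)) := by field_simp
    _ = 1 / (q n * q (n + 1)) := by rw [hdet, ← sq, neg_one_pow_sq]

theorem neg_one_pow_mul_convergent_add_two_sub (h : IsContFractConvergents a p q) (n : ℕ) :
    (-1) ^ n * ((p (n + 2) : ℝ) / q (n + 2) - p n / q n) = a (n + 2) / (q n * q (n + 2)) := by
  have hdet : ((p (n + 2) * q n - p n * q (n + 2) : ℤ) : ℝ) = (-1) ^ n * a (n + 2) := by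
    exact_mod_cast h.det_add_two n
  have := h.one_le_q n
  have := h.one_le_q (n + 2)
  push_cast at hdet
  calc (-1) ^ n * ((p (n + 2) : ℝ) / q (n + 2) - p n / q n)
      = (-1) ^ n * (p (n + 2) * q n - p n * q (n + 2)) / (q n * q (n + 2)) := by field_simp
    _ = a (n + 2) / (q n * q (n + 2)) := by rw [hdet, ← mul_assoc, ← sq, neg_one_pow_sq, one_mul]

variable {α : ℝ}

theorem neg_one_pow_mul_convergent_lt (h : IsContFractConvergents a p q)
    (hlim : Tendsto (fun n => (p n : ℝ) / q n) atTop (𝓝 α)) (n : ℕ) :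
    (-1) ^ n * ((p n : ℝ) / q n) < (-1) ^ n * α := by
  set g : ℕ → ℝ := fun k => (-1) ^ n * ((p (n + 2 * k) : ℝ) / q (n + 2 * k))
  have hg : StrictMono g := strictMono_nat_of_lt_succ fun k => by
    have hsign : (-1 : ℝ) ^ n = (-1) ^ (n + 2 * k) := by rw [pow_add, pow_mul]; simp
    have hstep := h.neg_one_pow_mul_convergent_add_two_sub (n + 2 * k)
    have : (0 : ℝ) < a (n + 2 * k + 2) / (q (n + 2 * k) * q (n + 2 * k + 2)) := by
      have := h.one_le_a (n + 2 * k + 2) (by omega)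
      have := h.one_le_q (n + 2 * k)
      have := h.one_le_q (n + 2 * k + 2)
      positivity
    simp only [g, hsign, mul_add, mul_one, ← add_assoc] at hstep ⊢
    linarith
  have hg_lim : Tendsto g atTop (𝓝 ((-1) ^ n * α)) :=
    (hlim.comp (tendsto_atTop_mono (fun k => (by omega : k ≤ n + 2 * k)) tendsto_id)).const_mul _
  simpa [g] using (hg zero_lt_one).trans_le (hg.monotone.ge_of_tendsto hg_lim 1)

theorem neg_one_pow_mul_sub_convergent_pos (h : IsContFractConvergents a p q)
    (hlim : Tendsto (fun n => (p n : ℝ) / q n) atTop (𝓝 α)) (n : ℕ) :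
    0 < (-1) ^ n * (α - p n / q n) := by
  rw [mul_sub]
  linarith [h.neg_one_pow_mul_convergent_lt hlim n]

theorem abs_sub_convergent_lt (h : IsContFractConvergents a p q)
    (hlim : Tendsto (fun n => (p n : ℝ) / q n) atTop (𝓝 α)) (n : ℕ) :
    |α - p n / q n| < 1 / (q n * q (n + 1)) := by
  have hnext := h.neg_one_pow_mul_convergent_lt hlim (n + 1)
  simp only [pow_succ, mul_neg, mul_one, neg_mul, neg_lt_neg_iff] at hnext
  rw [abs_eq_neg_one_pow_mul (h.neg_one_pow_mul_sub_convergent_pos hlim n),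
    ← h.neg_one_pow_mul_convergent_succ_sub n, mul_sub, mul_sub]
  linarith

theorem q_mul_sub_eq (h : IsContFractConvergents a p q) (n : ℕ) :
    q n * α - p n = q n * (α - p n / q n) := by
  have := h.one_le_q n
  field_simp

theorem one_div_two_mul_q_succ_le (h : IsContFractConvergents a p q)
    (hlim : Tendsto (fun n => (p n : ℝ) / q n) atTop (𝓝 α)) (n : ℕ) :
    1 / (2 * q (n + 1)) ≤ |q n * α - p n| := by
  have hfar := h.neg_one_pow_mul_convergent_lt hlim (n + 2)
  rw [pow_add, neg_one_sq, mul_one] at hfar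
  have hq0 : (1 : ℝ) ≤ q n := by exact_mod_cast h.one_le_q n
  have hq1 : (1 : ℝ) ≤ q (n + 1) := by exact_mod_cast h.one_le_q (n + 1)
  have hq2 : (1 : ℝ) ≤ q (n + 2) := by exact_mod_cast h.one_le_q (n + 2)
  have hq2le : (q (n + 2) : ℝ) ≤ 2 * (a (n + 2) * q (n + 1)) := by
    exact_mod_cast h.q_succ_le_two_mul_a_mul_q (n := n + 1) (by omega)
  calc 1 / (2 * q (n + 1) : ℝ) ≤ a (n + 2) / q (n + 2) := by
        rw [div_le_div_iff₀ (by positivity) (by positivity)]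
        linarith
    _ = q n * (a (n + 2) / (q n * q (n + 2))) := by field_simp
    _ ≤ q n * ((-1) ^ n * (α - p n / q n)) := by
        gcongr
        rw [← h.neg_one_pow_mul_convergent_add_two_sub n, mul_sub, mul_sub]
        linarith
    _ = |q n * α - p n| := by
        rw [h.q_mul_sub_eq, abs_mul, abs_of_pos (by positivity),
          abs_eq_neg_one_pow_mul (h.neg_one_pow_mul_sub_convergent_pos hlim n)]

theorem neg_one_pow_mul_q_mul_sub_pos (h : IsContFractConvergents a p q)
    (hlim : Tendsto (fun n => (p n : ℝ) / q n) atTop (𝓝 α)) (n : ℕ) :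
    0 < (-1) ^ n * (q n * α - p n) := by
  have : (0 : ℝ) < q n := by exact_mod_cast h.one_le_q n
  rw [h.q_mul_sub_eq, mul_left_comm]
  exact mul_pos this (h.neg_one_pow_mul_sub_convergent_pos hlim n)

theorem abs_q_mul_sub_le (h : IsContFractConvergents a p q)
    (hlim : Tendsto (fun n => (p n : ℝ) / q n) atTop (𝓝 α)) {n : ℕ} {P Q : ℤ} (hQ : 1 ≤ Q)
    (hQn : Q < q (n + 1)) : |q n * α - p n| ≤ |Q * α - P| := by
  -- `(P, Q) = x • (p n, q n) + y • (p (n + 1), q (n + 1))` with `x ≠ 0` and `x * y ≤ 0`, while the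
  -- two errors `q n * α - p n` and `q (n + 1) * α - p (n + 1)` have opposite signs.
  set x : ℤ := (-1) ^ n * (Q * p (n + 1) - P * q (n + 1))
  set y : ℤ := (-1) ^ n * (P * q n - Q * p n)
  have hxq : x * q n + y * q (n + 1) = Q := by
    linear_combination ((-1 : ℤ) ^ n * Q) * h.det n + Q * neg_one_pow_sq (R := ℤ) n
  have hxp : x * p n + y * p (n + 1) = P := by
    linear_combination ((-1 : ℤ) ^ n * P) * h.det n + P * neg_one_pow_sq (R := ℤ) n
  have hq0 := h.one_le_q n
  have hq1 := h.one_le_q (n + 1)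
  have hx : x ≠ 0 := by
    rintro hx0
    rw [hx0, zero_mul, zero_add] at hxq
    rcases le_or_gt y 0 with hy | hy <;> nlinarith
  have hxy : x * y ≤ 0 := by
    by_contra! hxy
    rcases lt_or_gt_of_ne hx with hx | hx
    · nlinarith [neg_of_mul_pos_right hxy hx.le]
    · nlinarith [pos_of_mul_pos_right hxy hx.le]
  have he : (q n * α - p n) * (q (n + 1) * α - p (n + 1)) < 0 := by
    have h0 := h.neg_one_pow_mul_q_mul_sub_pos hlim n
    have h1 := h.neg_one_pow_mul_q_mul_sub_pos hlim (n + 1)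
    rw [pow_succ] at h1
    nlinarith [mul_pos h0 h1, neg_one_pow_sq (R := ℝ) n]
  have hlin : (Q : ℝ) * α - P = x * (q n * α - p n) + y * (q (n + 1) * α - p (n + 1)) := by
    have hxqR : (x * q n + y * q (n + 1) : ℝ) = Q := by exact_mod_cast hxq
    have hxpR : (x * p n + y * p (n + 1) : ℝ) = P := by exact_mod_cast hxp
    linear_combination -α * hxqR + hxpR
  have hxyR : (x : ℝ) * y ≤ 0 := by exact_mod_cast hxy
  calc |q n * α - p n| ≤ |(x : ℝ)| * |q n * α - p n| :=
        le_mul_of_one_le_left (abs_nonneg _) (by exact_mod_cast Int.one_le_abs hx)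
    _ = |x * (q n * α - p n)| := (abs_mul _ _).symm
    _ ≤ |Q * α - P| := by
        rw [hlin]
        exact abs_le_abs_add_of_mul_nonneg (by nlinarith)

theorem exists_q_le_lt (h : IsContFractConvergents a p q) {Q : ℤ} (hQ : 1 ≤ Q) :
    ∃ n, q n ≤ Q ∧ Q < q (n + 1) := by
  have hbig : ∃ n, Q < q n := ⟨Q.toNat + 1, by have := h.natCast_le_q (Q.toNat + 1); omega⟩
  obtain ⟨n, hn, hn1⟩ :=
    Nat.exists_not_and_succ_of_not_zero_of_exists (by rw [h.q_zero]; omega) hbig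
  exact ⟨n, not_lt.mp hn, hn1⟩

theorem convergent_mem_approxSet (h : IsContFractConvergents a p q)
    (hlim : Tendsto (fun n => (p n : ℝ) / q n) atTop (𝓝 α)) {ν : ℝ} {n : ℕ}
    (hn : (q n : ℝ) ^ (ν - 1) ≤ q (n + 1)) : (p n, q n) ∈ approxSet α ν := by
  have hq : (0 : ℝ) < q n := by exact_mod_cast h.one_le_q n
  refine ⟨h.one_le_q n, (h.abs_sub_convergent_lt hlim n).trans_le ?_⟩
  gcongr
  calc (q n : ℝ) ^ ν = (q n : ℝ) ^ (ν - 1) * q n := by rw [Real.rpow_sub_one hq.ne']; field_simp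
    _ ≤ q (n + 1) * q n := by gcongr
    _ = q n * q (n + 1) := mul_comm _ _

theorem approxSet_infinite_of_frequently (h : IsContFractConvergents a p q)
    (hlim : Tendsto (fun n => (p n : ℝ) / q n) atTop (𝓝 α)) {ν : ℝ}
    (hfreq : ∃ᶠ n in atTop, (q n : ℝ) ^ (ν - 1) ≤ q (n + 1)) : (approxSet α ν).Infinite := by
  set I := {n | 1 ≤ n ∧ (q n : ℝ) ^ (ν - 1) ≤ q (n + 1)}
  have hI : I.Infinite := Nat.frequently_atTop_iff_infinite.mp <|
    (hfreq.and_eventually (eventually_ge_atTop 1)).mono fun _ hn => ⟨hn.2, hn.1⟩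
  have hinj : Set.InjOn (fun n => (p n, q n)) I := fun m hm n hn hmn =>
    h.strictMonoOn_q.injOn hm.1 hn.1 (congrArg Prod.snd hmn)
  refine (hI.image hinj).mono ?_
  rintro _ ⟨n, hn, rfl⟩
  exact h.convergent_mem_approxSet hlim hn.2

theorem rpow_sub_one_lt_two_mul_q_succ (h : IsContFractConvergents a p q)
    (hlim : Tendsto (fun n => (p n : ℝ) / q n) atTop (𝓝 α)) {ν : ℝ} {n : ℕ} {P Q : ℤ}
    (hPQ : (P, Q) ∈ approxSet α ν) (hQn : Q < q (n + 1)) : (Q : ℝ) ^ (ν - 1) < 2 * q (n + 1) := by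
  obtain ⟨hQ, happrox⟩ := hPQ
  have hQR : (0 : ℝ) < Q := by exact_mod_cast zero_lt_one.trans_le hQ
  have hq : (0 : ℝ) < q (n + 1) := by exact_mod_cast h.one_le_q (n + 1)
  have hchain : 1 / (2 * q (n + 1) : ℝ) < 1 / (Q : ℝ) ^ (ν - 1) :=
    calc 1 / (2 * q (n + 1) : ℝ) ≤ |q n * α - p n| := h.one_div_two_mul_q_succ_le hlim n
      _ ≤ |Q * α - P| := h.abs_q_mul_sub_le hlim hQ hQn
      _ = Q * |α - P / Q| := by
          rw [← abs_of_pos hQR, ← abs_mul, abs_of_pos hQR, mul_sub, mul_div_cancel₀ _ hQR.ne']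
      _ < Q * (1 / (Q : ℝ) ^ ν) := by gcongr
      _ = 1 / (Q : ℝ) ^ (ν - 1) := by rw [Real.rpow_sub_one hQR.ne']; field_simp
  exact (one_div_lt_one_div (by positivity) (by positivity)).mp hchain

theorem frequently_sub_one_le (h : IsContFractConvergents a p q)
    (hlim : Tendsto (fun n => (p n : ℝ) / q n) atTop (𝓝 α)) {ν : ℝ} (hν : 1 ≤ ν)
    (hinf : (approxSet α ν).Infinite) :
    ∃ᶠ n in atTop, ν - 1 ≤ Real.log (q (n + 1)) / Real.log (q n) + Real.log 2 / Real.log (q n) := by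
  rw [frequently_atTop]
  intro N
  obtain ⟨⟨P, Q⟩, hPQ, hNQ⟩ := exists_mem_approxSet_lt (by linarith) hinf (q (N + 2))
  obtain ⟨n, hnQ, hQn⟩ := h.exists_q_le_lt hPQ.1
  have hNn : N + 2 ≤ n := by
    by_contra! hn
    have := h.monotone_q (show n + 1 ≤ N + 2 by omega)
    dsimp only at hNQ
    omega
  refine ⟨n, by omega, le_log_div_add_log_two_div_of_rpow_lt ?_ ?_ (by linarith)
    (h.rpow_sub_one_lt_two_mul_q_succ hlim hPQ hQn)⟩
  · exact_mod_cast (h.natCast_le_q n).trans_lt' (by omega)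
  · exact_mod_cast hnQ

theorem ofReal_le_one_add_limsup_of_infinite (h : IsContFractConvergents a p q)
    (hlim : Tendsto (fun n => (p n : ℝ) / q n) atTop (𝓝 α)) {ν : ℝ}
    (hinf : (approxSet α ν).Infinite) :
    ENNReal.ofReal ν ≤
      1 + limsup (fun n => ENNReal.ofReal (Real.log (q (n + 1)) / Real.log (q n))) atTop := by
  have hν1 : ENNReal.ofReal (ν - 1) ≤
      limsup (fun n => ENNReal.ofReal (Real.log (q (n + 1)) / Real.log (q n))) atTop := by
    rcases lt_or_ge ν 1 with hν | hν
    · simp [ENNReal.ofReal_of_nonpos (by linarith : ν - 1 ≤ 0)]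
    rw [← limsup_ofReal_add_of_tendsto_zero
      ((tendsto_const_nhds (x := Real.log 2)).div_atTop h.tendsto_log_q)]
    exact le_limsup_of_frequently_le
      ((h.frequently_sub_one_le hlim hν hinf).mono fun _ hn => ENNReal.ofReal_le_ofReal hn)
  calc ENNReal.ofReal ν = ENNReal.ofReal (1 + (ν - 1)) := by ring_nf
    _ ≤ 1 + ENNReal.ofReal (ν - 1) := ENNReal.ofReal_one ▸ ENNReal.ofReal_add_le
    _ ≤ _ := by gcongr

theorem approxSet_infinite_of_ofReal_lt (h : IsContFractConvergents a p q)
    (hlim : Tendsto (fun n => (p n : ℝ) / q n) atTop (𝓝 α)) {ν : ℝ}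
    (hν : ENNReal.ofReal ν <
      1 + limsup (fun n => ENNReal.ofReal (Real.log (q (n + 1)) / Real.log (q n))) atTop) :
    (approxSet α ν).Infinite := by
  refine h.approxSet_infinite_of_frequently hlim ?_
  rcases le_or_gt ν 2 with hν2 | hν2
  · refine Frequently.of_forall fun n => ?_
    have hq : (1 : ℝ) ≤ q n := by exact_mod_cast h.one_le_q n
    calc (q n : ℝ) ^ (ν - 1) ≤ (q n : ℝ) ^ (1 : ℝ) :=
          Real.rpow_le_rpow_of_exponent_le hq (by linarith)
      _ ≤ q (n + 1) := by rw [Real.rpow_one]; exact_mod_cast h.monotone_q n.le_succ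
  have hlt : ENNReal.ofReal (ν - 1) <
      limsup (fun n => ENNReal.ofReal (Real.log (q (n + 1)) / Real.log (q n))) atTop := by
    rw [← ENNReal.add_lt_add_iff_left ENNReal.one_ne_top, ← ENNReal.ofReal_one,
      ← ENNReal.ofReal_add zero_le_one (by linarith)]
    simpa using hν
  refine ((frequently_lt_of_lt_limsup (by isBoundedDefault) hlt).and_eventually
    (eventually_ge_atTop 2)).mono fun n ⟨hn, hn2⟩ => ?_
  have hlog := h.log_q_pos hn2
  have hq : (0 : ℝ) < q n := by exact_mod_cast zero_lt_one.trans_le (h.one_le_q n)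
  have hq1 : (0 : ℝ) < q (n + 1) := by exact_mod_cast zero_lt_one.trans_le (h.one_le_q (n + 1))
  rw [Real.rpow_le_iff_le_log hq hq1, ← le_div_iff₀ hlog]
  exact ((ENNReal.ofReal_lt_ofReal_iff'.mp hn).1).le

theorem irrExp_eq_one_add_limsup (h : IsContFractConvergents a p q)
    (hlim : Tendsto (fun n => (p n : ℝ) / q n) atTop (𝓝 α)) :
    irrExp α =
      1 + limsup (fun n => ENNReal.ofReal (Real.log (q (n + 1)) / Real.log (q n))) atTop :=
  (irrExp_eq_sSup_approxSet α).trans <|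
    sSup_ofReal_setOf_eq (fun _ hν => h.approxSet_infinite_of_ofReal_lt hlim hν)
      (fun _ hν => h.ofReal_le_one_add_limsup_of_infinite hlim hν)

end IsContFractConvergents

open Filter in
theorem stmt_2_general (α : ℝ) (a p q : ℕ → ℤ)
    (ha : ∀ n, 1 ≤ n → 1 ≤ a n)
    (hp0 : p 0 = a 0) (hp1 : p 1 = a 1 * a 0 + 1)
    (hq0 : q 0 = 1) (hq1 : q 1 = a 1)
    (hp : ∀ n, p (n + 2) = a (n + 2) * p (n + 1) + p n)
    (hq : ∀ n, q (n + 2) = a (n + 2) * q (n + 1) + q n)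
    (hlim : Tendsto (fun n => (p n : ℝ) / (q n : ℝ)) atTop (nhds α)) :
    irrExp α =
        1 + limsup (fun n => ENNReal.ofReal (Real.log (q (n + 1)) / Real.log (q n))) atTop ∧
      irrExp α =
        2 + limsup (fun n => ENNReal.ofReal (Real.log (a (n + 1)) / Real.log (q n))) atTop := by
  have h : IsContFractConvergents a p q := ⟨ha, hp0, hp1, hq0, hq1, hp, hq⟩
  have hfirst := h.irrExp_eq_one_add_limsup hlim
  refine ⟨hfirst, ?_⟩
  rw [hfirst, h.limsup_log_q_succ_div_eq, ← add_assoc, one_add_one_eq_two]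

open Filter in
/-- If `α` is irrational with continued fraction partial quotients `a n` (for `n ≥ 1`,
`a 0 = ⌊α⌋`), convergents `p n / q n` (characterized by the standard recursions and the
convergence of `p n / q n` to `α`), then
`μ(α) = 1 + limsup (ln q (n+1) / ln q n) = 2 + limsup (ln a (n+1) / ln q n)`. -/
theorem stmt_2 (α : ℝ) (hα : Irrational α) (a p q : ℕ → ℤ)
    (ha : ∀ n, 1 ≤ n → 1 ≤ a n)
    (hp0 : p 0 = a 0) (hp1 : p 1 = a 1 * a 0 + 1)
    (hq0 : q 0 = 1) (hq1 : q 1 = a 1)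
    (hp : ∀ n, p (n + 2) = a (n + 2) * p (n + 1) + p n)
    (hq : ∀ n, q (n + 2) = a (n + 2) * q (n + 1) + q n)
    (hlim : Tendsto (fun n => (p n : ℝ) / (q n : ℝ)) atTop (nhds α)) :
    irrExp α =
        1 + limsup (fun n => ENNReal.ofReal (Real.log (q (n + 1)) / Real.log (q n))) atTop ∧
      irrExp α =
        2 + limsup (fun n => ENNReal.ofReal (Real.log (a (n + 1)) / Real.log (q n))) atTop :=
  stmt_2_general α a p q ha hp0 hp1 hq0 hq1 hp hq hlim
end

section
/- For every μ ∈ [2, +∞) there exists an irrational real number α whose irrationality exponent equals μ. -/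
open scoped ENNReal

namespace IrrExp3

/-- Continued-fraction style recurrence: `(p_n, q_n)`. -/
noncomputable def cf (μ : ℝ) : ℕ → ℕ × ℕ
  | 0 => (0, 1)
  | 1 => (1, 2)
  | n + 2 =>
    (max 1 ⌊((cf μ (n + 1)).2 : ℝ) ^ (μ - 2)⌋₊ * (cf μ (n + 1)).1 + (cf μ n).1,
     max 1 ⌊((cf μ (n + 1)).2 : ℝ) ^ (μ - 2)⌋₊ * (cf μ (n + 1)).2 + (cf μ n).2)

variable (μ : ℝ)

noncomputable def P (n : ℕ) : ℕ := (cf μ n).1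
noncomputable def Q (n : ℕ) : ℕ := (cf μ n).2
noncomputable def A (n : ℕ) : ℕ := max 1 ⌊((Q μ (n + 1) : ℝ)) ^ (μ - 2)⌋₊

lemma P_zero : P μ 0 = 0 := rfl
lemma P_one : P μ 1 = 1 := rfl
lemma Q_zero : Q μ 0 = 1 := rfl
lemma Q_one : Q μ 1 = 2 := rfl

lemma P_rec (n : ℕ) : P μ (n + 2) = A μ n * P μ (n + 1) + P μ n := by
  simp [P, Q, A, cf]

lemma Q_rec (n : ℕ) : Q μ (n + 2) = A μ n * Q μ (n + 1) + Q μ n := by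
  simp [Q, A, cf]

lemma A_pos (n : ℕ) : 1 ≤ A μ n := le_max_left _ _

lemma Q_pos (n : ℕ) : 1 ≤ Q μ n := by
  induction n using Nat.strong_induction_on with
  | _ n ih =>
    match n with
    | 0 => simp [Q_zero]
    | 1 => simp [Q_one]
    | (m + 2) =>
      rw [Q_rec]
      have := ih m (by omega)
      omega

lemma Q_strictMono : StrictMono (Q μ) := by
  apply strictMono_nat_of_lt_succ
  intro n
  match n with
  | 0 => simp [Q_zero, Q_one]
  | (m + 1) =>
    rw [Q_rec]
    have h1 := Q_pos μ m
    have h2 := A_pos μ m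
    nlinarith [Q_pos μ (m+1)]

lemma Q_ge (n : ℕ) : n + 1 ≤ Q μ n := by
  induction n with
  | zero => simp [Q_zero]
  | succ m ih =>
    have h := Q_strictMono μ (Nat.lt_succ_self m)
    simp only [Nat.succ_eq_add_one] at h
    show m + 2 ≤ Q μ (m + 1)
    omega

lemma det (n : ℕ) : (P μ (n + 1) : ℤ) * Q μ n - P μ n * Q μ (n + 1) = (-1) ^ n := by
  induction n with
  | zero => simp [P_zero, P_one, Q_zero, Q_one]
  | succ m ih =>
    rw [P_rec, Q_rec]
    push_cast
    push_cast at ih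
    ring_nf
    ring_nf at ih
    nlinarith [ih]


/-! ### The series -/

noncomputable def c (n : ℕ) : ℝ := 1 / ((Q μ n : ℝ) * (Q μ (n + 1) : ℝ))
noncomputable def d (n : ℕ) : ℝ := (-1) ^ n * c μ n
noncomputable def T (n : ℕ) : ℝ := ∑' k, d μ (n + k)
noncomputable def L (n : ℕ) : ℝ := (-1) ^ n * T μ n

lemma QR_pos (n : ℕ) : (0 : ℝ) < (Q μ n : ℝ) := by
  exact_mod_cast (Q_pos μ n)

lemma QR_lt (n : ℕ) : (Q μ n : ℝ) < Q μ (n + 1) := by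
  exact_mod_cast Q_strictMono μ (by omega : n < n + 1)

lemma c_pos (n : ℕ) : 0 < c μ n :=
  div_pos one_pos (mul_pos (QR_pos μ n) (QR_pos μ (n + 1)))

lemma c_lt (n : ℕ) : c μ (n + 1) < c μ n := by
  have hY : (0:ℝ) < (Q μ n : ℝ) * Q μ (n+1) := mul_pos (QR_pos μ n) (QR_pos μ (n+1))
  have hXY : ((Q μ n : ℝ) * Q μ (n+1)) < (Q μ (n+1) : ℝ) * Q μ (n+1+1) := by
    have h1 := QR_lt μ n
    have h2 := QR_lt μ (n+1)
    nlinarith [QR_pos μ n, QR_pos μ (n+1)]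
  exact one_div_lt_one_div_of_lt hY hXY

lemma Q_next_ge (n : ℕ) : Q μ (n + 1) + Q μ n ≤ Q μ (n + 2) := by
  rw [Q_rec]
  have := A_pos μ n
  nlinarith [Q_pos μ (n+1), Q_pos μ n]

lemma c_half (n : ℕ) : c μ (n + 1) ≤ c μ n / 2 := by
  have hq : 2 * Q μ n ≤ Q μ (n + 2) := by
    have h1 : Q μ n + 1 ≤ Q μ (n + 1) := Q_strictMono μ (by omega : n < n + 1)
    have h2 := Q_next_ge μ n
    omega
  have h : 2 * ((Q μ n : ℝ) * Q μ (n+1)) ≤ (Q μ (n+1) : ℝ) * Q μ (n+1+1) := by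
    have hq' : (2 : ℝ) * Q μ n ≤ Q μ (n+1+1) := by exact_mod_cast hq
    nlinarith [QR_pos μ (n+1)]
  have h2 : c μ (n + 1) ≤ 1 / (2 * ((Q μ n : ℝ) * Q μ (n+1))) :=
    one_div_le_one_div_of_le (mul_pos two_pos (mul_pos (QR_pos μ n) (QR_pos μ (n+1)))) h
  calc c μ (n + 1) ≤ 1 / (2 * ((Q μ n : ℝ) * Q μ (n+1))) := h2
    _ = c μ n / 2 := by rw [c, one_div, one_div, mul_inv]; ring

lemma c_le_sq (n : ℕ) : c μ n ≤ 1 / ((n : ℝ) + 1) ^ 2 := by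
  rw [c]
  apply one_div_le_one_div_of_le (by positivity)
  have h1 : (n : ℝ) + 1 ≤ Q μ n := by exact_mod_cast Q_ge μ n
  have h2 : (n : ℝ) + 1 ≤ Q μ (n + 1) := by
    have h := Q_ge μ (n + 1)
    have : ((n:ℝ) + 1) + 1 ≤ Q μ (n + 1) := by exact_mod_cast h
    linarith
  nlinarith

lemma summable_c : Summable (c μ) := by
  have h0 : Summable (fun n : ℕ => 1 / (n : ℝ) ^ 2) :=
    Real.summable_one_div_nat_pow.mpr one_lt_two
  have hs : Summable (fun n : ℕ => 1 / ((n : ℝ) + 1) ^ 2) := by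
    have := (summable_nat_add_iff 1).mpr h0
    simpa using this
  exact Summable.of_nonneg_of_le (fun n => (c_pos μ n).le) (c_le_sq μ) hs

lemma summable_d : Summable (d μ) := by
  apply Summable.of_abs
  have : (fun n => |d μ n|) = c μ := by
    funext n
    rw [d, abs_mul, abs_pow, abs_neg, abs_one, one_pow, one_mul,
      abs_of_pos (c_pos μ n)]
  rw [this]; exact summable_c μ

lemma summable_tail (n : ℕ) : Summable (fun k => d μ (n + k)) := by
  have := (summable_nat_add_iff n).mpr (summable_d μ)
  simpa [add_comm] using this

lemma T_rec (n : ℕ) : T μ n = d μ n + T μ (n + 1) := by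
  rw [T, Summable.tsum_eq_zero_add (summable_tail μ n), add_zero]
  congr 1
  rw [T]
  exact tsum_congr fun k => by rw [show n + (k + 1) = n + 1 + k by omega]

lemma L_rec (n : ℕ) : L μ n = c μ n - L μ (n + 1) := by
  rw [L, L, T_rec, mul_add, d, ← mul_assoc, ← pow_add]
  have he : (-1 : ℝ) ^ (n + n) = 1 := Even.neg_one_pow ⟨n, rfl⟩
  rw [he, one_mul, pow_succ]
  ring

lemma L_eq (n : ℕ) : L μ n = ∑' k, (-1 : ℝ) ^ k * c μ (n + k) := by
  rw [L, T, ← tsum_mul_left]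
  exact tsum_congr fun k => by
    rw [d, ← mul_assoc, ← pow_add, show n + (n + k) = (n + n) + k by omega, pow_add,
      Even.neg_one_pow ⟨n, rfl⟩, one_mul]

lemma summable_g (n : ℕ) : Summable (fun k => (-1 : ℝ) ^ k * c μ (n + k)) := by
  have h := (summable_tail μ n).mul_left ((-1 : ℝ) ^ n)
  have he : (fun k => (-1 : ℝ) ^ n * d μ (n + k)) = fun k => (-1 : ℝ) ^ k * c μ (n + k) := by
    funext k
    rw [d, ← mul_assoc, ← pow_add, show n + (n + k) = (n + n) + k by omega, pow_add,
      Even.neg_one_pow ⟨n, rfl⟩, one_mul]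
  rwa [he] at h

lemma L_nonneg (n : ℕ) : 0 ≤ L μ n := by
  rw [L_eq]
  set g := fun k => (-1 : ℝ) ^ k * c μ (n + k) with hg
  have hsum : Summable g := summable_g μ n
  have h2 : Function.Injective (fun k : ℕ => 2 * k) := by
    intro a b h; dsimp only at h; omega
  have h21 : Function.Injective (fun k : ℕ => 2 * k + 1) := by
    intro a b h; dsimp only at h; omega
  have hse : Summable (fun k => g (2 * k)) := hsum.comp_injective h2
  have hso : Summable (fun k => g (2 * k + 1)) := hsum.comp_injective h21
  rw [← tsum_even_add_odd hse hso]
  have heg : ∀ k, g (2 * k) = c μ (n + 2 * k) := by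
    intro k; simp only [hg]; rw [pow_mul]; norm_num
  have hog : ∀ k, g (2 * k + 1) = -c μ (n + (2 * k + 1)) := by
    intro k; simp only [hg]; rw [pow_succ, pow_mul]; norm_num
  have hse' : Summable (fun k => c μ (n + 2 * k)) := by
    have h := hse; simp_rw [heg] at h; exact h
  have hso' : Summable (fun k => c μ (n + (2 * k + 1))) := by
    have h := hso; simp_rw [hog] at h
    have := h.neg; simpa using this
  have key : ∑' k, c μ (n + (2 * k + 1)) ≤ ∑' k, c μ (n + 2 * k) := by
    apply Summable.tsum_le_tsum _ hso' hse'
    intro k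
    exact le_of_lt (by rw [show n + (2*k+1) = (n + 2*k) + 1 by omega]; exact c_lt μ _)
  calc (0 : ℝ) ≤ ∑' k, c μ (n + 2 * k) - ∑' k, c μ (n + (2 * k + 1)) := by linarith
    _ = ∑' k, g (2 * k) + ∑' k, g (2 * k + 1) := by
        rw [tsum_congr heg, tsum_congr hog, tsum_neg]; ring

lemma L_le (n : ℕ) : L μ n ≤ c μ n := by
  have h1 := L_rec μ n; have h2 := L_nonneg μ (n + 1); linarith

lemma L_ge (n : ℕ) : c μ n - c μ (n + 1) ≤ L μ n := by
  have h1 := L_rec μ n; have h2 := L_le μ (n + 1); linarith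

lemma L_pos (n : ℕ) : 0 < L μ n := lt_of_lt_of_le (by linarith [c_lt μ n]) (L_ge μ n)

lemma L_lt (n : ℕ) : L μ n < c μ n := by
  have h1 := L_rec μ n; have h2 := L_pos μ (n + 1); linarith

lemma abs_T (n : ℕ) : |T μ n| = L μ n := by
  have h : T μ n = (-1 : ℝ) ^ n * L μ n := by
    rw [L, ← mul_assoc, ← pow_add, Even.neg_one_pow ⟨n, rfl⟩, one_mul]
  rw [h, abs_mul, abs_pow, abs_neg, abs_one, one_pow, one_mul,
    abs_of_nonneg (L_nonneg μ n)]

lemma abs_T_lt (n : ℕ) : |T μ n| < c μ n := by rw [abs_T]; exact L_lt μ n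

lemma abs_T_ge (n : ℕ) : c μ n / 2 ≤ |T μ n| := by
  rw [abs_T]
  have := L_ge μ n
  have := c_half μ n
  linarith

/-! ### α and its approximation properties -/

noncomputable def alpha : ℝ := T μ 0

noncomputable def s (n : ℕ) : ℝ := (P μ n : ℝ) / (Q μ n : ℝ)

lemma s_succ_sub (n : ℕ) : s μ (n + 1) - s μ n = d μ n := by
  have hdet : ((P μ (n + 1) : ℝ) * Q μ n - P μ n * Q μ (n + 1)) = (-1) ^ n := by
    exact_mod_cast det μ n
  have h1 := (QR_pos μ n).ne'
  have h2 := (QR_pos μ (n+1)).ne'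
  have hs : s μ (n+1) - s μ n
      = ((P μ (n + 1) : ℝ) * Q μ n - P μ n * Q μ (n + 1)) / ((Q μ n : ℝ) * Q μ (n + 1)) := by
    rw [s, s]
    field_simp
  rw [hs, hdet, d, c]
  ring

lemma alpha_sub_s (n : ℕ) : alpha μ - s μ n = T μ n := by
  induction n with
  | zero =>
    have : s μ 0 = 0 := by rw [s, P_zero]; simp
    rw [this, alpha, sub_zero]
  | succ m ih =>
    have h1 := s_succ_sub μ m
    have h2 := T_rec μ m
    have : alpha μ - s μ (m + 1) = (alpha μ - s μ m) - (s μ (m + 1) - s μ m) := by ring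
    rw [this, ih, h1, h2]; ring

lemma alpha_approx_lt (n : ℕ) : |alpha μ - s μ n| < c μ n := by
  rw [alpha_sub_s]; exact abs_T_lt μ n

lemma alpha_approx_ge (n : ℕ) : c μ n / 2 ≤ |alpha μ - s μ n| := by
  rw [alpha_sub_s]; exact abs_T_ge μ n

lemma alpha_ne_s (n : ℕ) : alpha μ ≠ s μ n := by
  intro h
  have h1 := alpha_approx_ge μ n
  rw [h, sub_self, abs_zero] at h1
  have := c_pos μ n
  linarith

/-- General rational distance bound: if `x ≠ p/q` then `|x - p/q| ≥ 1/(den*q)`. -/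
lemma rat_dist (x : ℚ) (p : ℤ) (q : ℕ) (hq : 0 < q) (hne : (x : ℝ) ≠ (p : ℝ) / (q : ℝ)) :
    1 / ((x.den : ℝ) * q) ≤ |(x : ℝ) - (p : ℝ) / (q : ℝ)| := by
  have hden : (0 : ℝ) < (x.den : ℝ) := by exact_mod_cast x.pos
  have hqr : (0 : ℝ) < (q : ℝ) := by exact_mod_cast hq
  have hz : (x : ℝ) - (p : ℝ) / q = ((x.num * q - p * x.den : ℤ) : ℝ) / ((x.den : ℝ) * q) := by
    rw [Rat.cast_def]
    push_cast
    field_simp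
  have hnz : (x.num * (q : ℤ) - p * x.den) ≠ 0 := by
    intro h0
    apply hne
    have := hz
    rw [h0] at this
    simp at this
    linarith [this]
  have h1 : (1 : ℝ) ≤ |((x.num * q - p * x.den : ℤ) : ℝ)| := by
    rw [← Int.cast_abs]
    exact_mod_cast Int.one_le_abs hnz
  rw [hz, abs_div, abs_of_pos (mul_pos hden hqr)]
  gcongr

lemma alpha_irrational : Irrational (alpha μ) := by
  rw [Irrational]
  rintro ⟨x, hx⟩
  obtain ⟨n, hn⟩ : ∃ n, (x.den : ℝ) < Q μ (n + 1) := by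
    refine ⟨x.den, ?_⟩
    have h := Q_ge μ (x.den + 1)
    have : (x.den : ℝ) + 2 ≤ Q μ (x.den + 1) := by exact_mod_cast h
    linarith
  have hne : (x : ℝ) ≠ (P μ n : ℝ) / (Q μ n : ℝ) := by
    rw [hx]; exact alpha_ne_s μ n
  have key := rat_dist x (P μ n) (Q μ n) (Q_pos μ n) (by push_cast; exact hne)
  push_cast at key
  have hlt : |(x : ℝ) - (P μ n : ℝ) / (Q μ n : ℝ)| < c μ n := by
    rw [hx]; exact alpha_approx_lt μ n
  have hden : (0 : ℝ) < (x.den : ℝ) := by exact_mod_cast x.pos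
  have hQn := QR_pos μ n
  have hc : c μ n ≤ 1 / ((x.den : ℝ) * Q μ n) := by
    rw [c]
    apply one_div_le_one_div_of_le (mul_pos hden hQn)
    nlinarith
  linarith

/-! ### Growth estimates (assuming `2 ≤ μ`) -/

lemma QR_one_le (n : ℕ) : (1 : ℝ) ≤ (Q μ n : ℝ) := by exact_mod_cast Q_pos μ n

lemma one_le_rpow_Q (n : ℕ) {e : ℝ} (he : 0 ≤ e) : (1 : ℝ) ≤ (Q μ n : ℝ) ^ e := by
  calc (1 : ℝ) = (Q μ n : ℝ) ^ (0 : ℝ) := (Real.rpow_zero _).symm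
    _ ≤ (Q μ n : ℝ) ^ e := Real.rpow_le_rpow_of_exponent_le (QR_one_le μ n) he

variable {μ}

lemma A_le (hμ : 2 ≤ μ) (n : ℕ) : (A μ n : ℝ) ≤ (Q μ (n + 1) : ℝ) ^ (μ - 2) := by
  rw [A]
  push_cast [Nat.cast_max]
  apply max_le
  · exact one_le_rpow_Q μ (n + 1) (by linarith)
  · exact Nat.floor_le (Real.rpow_nonneg (QR_pos μ (n + 1)).le _)

lemma A_ge (n : ℕ) : (Q μ (n + 1) : ℝ) ^ (μ - 2) - 1 ≤ (A μ n : ℝ) := by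
  have h1 : ((Q μ (n + 1) : ℝ)) ^ (μ - 2) - 1 < (⌊((Q μ (n + 1) : ℝ)) ^ (μ - 2)⌋₊ : ℝ) :=
    Nat.sub_one_lt_floor _
  have h2 : (⌊((Q μ (n + 1) : ℝ)) ^ (μ - 2)⌋₊ : ℝ) ≤ (A μ n : ℝ) := by
    exact_mod_cast le_max_right _ _
  linarith

lemma rpow_Q_mul (n : ℕ) (e : ℝ) :
    (Q μ n : ℝ) ^ e * (Q μ n : ℝ) = (Q μ n : ℝ) ^ (e + 1) := by
  rw [Real.rpow_add_one (QR_pos μ n).ne']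

lemma Q_succ_le (hμ : 2 ≤ μ) (n : ℕ) :
    (Q μ (n + 2) : ℝ) ≤ 2 * (Q μ (n + 1) : ℝ) ^ (μ - 1) := by
  have h0 : (Q μ (n + 2) : ℝ) = (A μ n : ℝ) * Q μ (n + 1) + Q μ n := by
    rw [Q_rec]; push_cast; ring
  have h1 : (A μ n : ℝ) * Q μ (n + 1) ≤ (Q μ (n + 1) : ℝ) ^ (μ - 1) := by
    calc (A μ n : ℝ) * Q μ (n + 1) ≤ (Q μ (n + 1) : ℝ) ^ (μ - 2) * Q μ (n + 1) := by
          have := A_le hμ n; nlinarith [QR_pos μ (n + 1)]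
      _ = (Q μ (n + 1) : ℝ) ^ (μ - 2 + 1) := rpow_Q_mul (n + 1) _
      _ = (Q μ (n + 1) : ℝ) ^ (μ - 1) := by rw [show μ - 2 + 1 = μ - 1 by ring]
  have h2 : (Q μ n : ℝ) ≤ (Q μ (n + 1) : ℝ) ^ (μ - 1) := by
    calc (Q μ n : ℝ) ≤ (Q μ (n + 1) : ℝ) := (QR_lt μ n).le
      _ = (Q μ (n + 1) : ℝ) ^ (1 : ℝ) := (Real.rpow_one _).symm
      _ ≤ (Q μ (n + 1) : ℝ) ^ (μ - 1) :=
          Real.rpow_le_rpow_of_exponent_le (QR_one_le μ (n + 1)) (by linarith)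
  linarith

lemma Q_succ_ge (n : ℕ) :
    (Q μ (n + 1) : ℝ) ^ (μ - 1) - (Q μ (n + 1) : ℝ) ≤ (Q μ (n + 2) : ℝ) := by
  have h0 : (Q μ (n + 2) : ℝ) = (A μ n : ℝ) * Q μ (n + 1) + Q μ n := by
    rw [Q_rec]; push_cast; ring
  have h1 : ((Q μ (n + 1) : ℝ) ^ (μ - 2) - 1) * Q μ (n + 1) ≤ (A μ n : ℝ) * Q μ (n + 1) := by
    have := A_ge (μ := μ) n; nlinarith [QR_pos μ (n + 1)]
  have h2 : ((Q μ (n + 1) : ℝ) ^ (μ - 2) - 1) * Q μ (n + 1)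
      = (Q μ (n + 1) : ℝ) ^ (μ - 1) - Q μ (n + 1) := by
    have := rpow_Q_mul (μ := μ) (n + 1) (μ - 2)
    have he : μ - 2 + 1 = μ - 1 := by ring
    rw [sub_mul, one_mul, this, he]
  nlinarith [QR_pos μ n]

/-! ### Infinitely many good approximations below `μ` -/

lemma lower_bound (hμ : 2 ≤ μ) {ν : ℝ} (hν : ν < μ) :
    {pq : ℤ × ℤ | 1 ≤ pq.2 ∧
      |alpha μ - (pq.1 : ℝ) / (pq.2 : ℝ)| < 1 / (pq.2 : ℝ) ^ ν}.Infinite := by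
  -- find N such that for all n ≥ N, (Q n)^ν ≤ Q n * Q (n+1)
  obtain ⟨N, hN⟩ : ∃ N : ℕ, ∀ n, N ≤ n → ((Q μ n : ℝ)) ^ ν ≤ (Q μ n : ℝ) * Q μ (n + 1) := by
    rcases le_or_gt ν 2 with hν2 | hν2
    · refine ⟨0, fun n _ => ?_⟩
      calc ((Q μ n : ℝ)) ^ ν ≤ ((Q μ n : ℝ)) ^ (2 : ℝ) :=
            Real.rpow_le_rpow_of_exponent_le (QR_one_le μ n) hν2
        _ = (Q μ n : ℝ) * Q μ n := by
            rw [show (2:ℝ) = ((2:ℕ):ℝ) by norm_num, Real.rpow_natCast]; ring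
        _ ≤ (Q μ n : ℝ) * Q μ (n + 1) := by nlinarith [QR_pos μ n, QR_lt μ n]
    · -- ν > 2, so μ > 2 as well
      set B : ℝ := 2 ^ (1 / (μ - ν)) with hB
      have hμν : 0 < μ - ν := by linarith
      have hBpos : 0 < B := Real.rpow_pos_of_pos two_pos _
      obtain ⟨N0, hN0⟩ := exists_nat_ge B
      refine ⟨N0, fun n hn => ?_⟩
      have hQB : B ≤ (Q μ n : ℝ) := by
        have h1 : (N0 : ℝ) ≤ (n : ℝ) := by exact_mod_cast hn
        have h2 : (n : ℝ) + 1 ≤ Q μ n := by exact_mod_cast Q_ge μ n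
        linarith
      have h2le : (2 : ℝ) ≤ (Q μ n : ℝ) ^ (μ - ν) := by
        calc (2 : ℝ) = B ^ (μ - ν) := by
              rw [hB, ← Real.rpow_mul (by norm_num : (0:ℝ) ≤ 2),
                one_div, inv_mul_cancel₀ hμν.ne', Real.rpow_one]
          _ ≤ (Q μ n : ℝ) ^ (μ - ν) := Real.rpow_le_rpow hBpos.le hQB hμν.le
      -- key: Q (n+1) ≥ (Q n)^(ν-1)
      have hkey : ((Q μ n : ℝ)) ^ (ν - 1) ≤ (Q μ (n + 1) : ℝ) := by
        rcases Nat.eq_zero_or_pos n with rfl | hn1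
        · -- n = 0 : Q 0 = 1
          have : ((Q μ 0 : ℝ)) ^ (ν - 1) = 1 := by rw [Q_zero]; simp
          rw [this]; exact QR_one_le μ 1
        · obtain ⟨m, rfl⟩ := Nat.exists_eq_add_of_le hn1
          have hge := Q_succ_ge (μ := μ) m
          have hsplit : ((Q μ (1 + m) : ℝ)) ^ (μ - 1)
              = ((Q μ (1 + m) : ℝ)) ^ (ν - 1) * ((Q μ (1 + m) : ℝ)) ^ (μ - ν) := by
            rw [← Real.rpow_add (QR_pos μ (1 + m))]; ring_nf
          have hQν : (Q μ (1 + m) : ℝ) ≤ ((Q μ (1 + m) : ℝ)) ^ (ν - 1) := by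
            calc (Q μ (1 + m) : ℝ) = ((Q μ (1 + m) : ℝ)) ^ (1:ℝ) := (Real.rpow_one _).symm
              _ ≤ _ := Real.rpow_le_rpow_of_exponent_le (QR_one_le μ _) (by linarith)
          have h2' : (2 : ℝ) ≤ (Q μ (1 + m) : ℝ) ^ (μ - ν) := h2le
          have hpos : (0:ℝ) < ((Q μ (1 + m) : ℝ)) ^ (ν - 1) :=
            Real.rpow_pos_of_pos (QR_pos μ _) _
          have h15 : 2 * ((Q μ (1 + m) : ℝ)) ^ (ν - 1) ≤ ((Q μ (1 + m) : ℝ)) ^ (μ - 1) := by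
            rw [hsplit]; nlinarith
          have hidx : (1 + m) + 1 = m + 2 := by omega
          have : ((Q μ (1 + m) : ℝ)) ^ (ν - 1) ≤ (Q μ (m + 2) : ℝ) := by
            have hmm : (1 + m) = m + 1 := by omega
            rw [hmm] at h15 hQν hpos ⊢
            linarith [Q_succ_ge (μ := μ) m]
          rw [show (1 + m) + 1 = m + 2 by omega]
          exact this
      calc ((Q μ n : ℝ)) ^ ν = ((Q μ n : ℝ)) ^ (1 + (ν - 1)) := by norm_num
        _ = (Q μ n : ℝ) * ((Q μ n : ℝ)) ^ (ν - 1) := by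
            rw [Real.rpow_add (QR_pos μ n), Real.rpow_one]
        _ ≤ (Q μ n : ℝ) * Q μ (n + 1) := by nlinarith [QR_pos μ n]
  -- the map n ↦ (P (N + n), Q (N + n)) lands in the set and is injective
  apply Set.infinite_of_injective_forall_mem
    (f := fun k : ℕ => ((P μ (N + k) : ℤ), (Q μ (N + k) : ℤ)))
  · intro a b hab
    have h2 : (Q μ (N + a) : ℤ) = (Q μ (N + b) : ℤ) := congrArg Prod.snd hab
    have h3 : Q μ (N + a) = Q μ (N + b) := by exact_mod_cast h2
    have := (Q_strictMono μ).injective h3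
    omega
  · intro k
    refine ⟨?_, ?_⟩
    · show (1 : ℤ) ≤ (Q μ (N + k) : ℤ)
      exact_mod_cast Q_pos μ (N + k)
    · have h1 : |alpha μ - s μ (N + k)| < c μ (N + k) := alpha_approx_lt μ (N + k)
      have h2 : c μ (N + k) ≤ 1 / ((Q μ (N + k) : ℝ)) ^ ν := by
        rw [c]
        apply one_div_le_one_div_of_le (Real.rpow_pos_of_pos (QR_pos μ _) _)
        exact hN (N + k) (by omega)
      have hcast : (((Q μ (N + k) : ℤ) : ℝ)) = ((Q μ (N + k) : ℕ) : ℝ) := by push_cast; rfl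
      have hcastp : (((P μ (N + k) : ℤ) : ℝ)) = ((P μ (N + k) : ℕ) : ℝ) := by push_cast; rfl
      simp only [hcast, hcastp]
      calc |alpha μ - (P μ (N + k) : ℝ) / (Q μ (N + k) : ℝ)| < c μ (N + k) := h1
        _ ≤ 1 / ((Q μ (N + k) : ℝ)) ^ ν := h2

/-! ### Only finitely many approximations above `μ` -/

set_option maxHeartbeats 2000000 in
lemma key_no_sol (hμ : 2 ≤ μ) {ν : ℝ} (hν : μ < ν) :
    ∃ Q0 : ℕ, 2 ≤ Q0 ∧ ∀ (p : ℤ) (q : ℕ), Q0 ≤ q →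
      ¬ (|alpha μ - (p : ℝ) / (q : ℝ)| < 1 / (q : ℝ) ^ ν) := by
  have hν2 : (2 : ℝ) < ν := lt_of_le_of_lt hμ hν
  have hνμ : 0 < ν - μ := by linarith
  have hν2' : 0 < ν - 2 := by linarith
  set C : ℝ := 4 * 2 ^ μ with hC
  have hCpos : (0 : ℝ) < C := by positivity
  set B1 : ℝ := 4 ^ (1 / (ν - 2)) with hB1
  set B2 : ℝ := C ^ (1 / (ν - μ)) with hB2
  obtain ⟨Q0, hQ0⟩ := exists_nat_ge (max (max B1 B2) 2)
  refine ⟨Q0 + 2, by omega, ?_⟩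
  intro p q hq habs
  have hq2 : 2 ≤ q := by omega
  have hqR : (2 : ℝ) ≤ (q : ℝ) := by exact_mod_cast hq2
  have hqpos : (0 : ℝ) < (q : ℝ) := by linarith
  have hqB1 : B1 ≤ (q : ℝ) := by
    have h1 : B1 ≤ max (max B1 B2) 2 := le_trans (le_max_left _ _) (le_max_left _ _)
    have h2 : (Q0 : ℝ) ≤ q := by exact_mod_cast (by omega : Q0 ≤ q)
    linarith
  have hqB2 : B2 ≤ (q : ℝ) := by
    have h1 : B2 ≤ max (max B1 B2) 2 := le_trans (le_max_right _ _) (le_max_left _ _)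
    have h2 : (Q0 : ℝ) ≤ q := by exact_mod_cast (by omega : Q0 ≤ q)
    linarith
  -- q^ν ≥ 4 q^2  and  q^ν ≥ C q^μ
  have hq4 : 4 * (q : ℝ) ^ (2:ℝ) ≤ (q : ℝ) ^ ν := by
    have h1 : (4 : ℝ) = B1 ^ (ν - 2) := by
      rw [hB1, ← Real.rpow_mul (by norm_num : (0:ℝ) ≤ 4), one_div,
        inv_mul_cancel₀ hν2'.ne', Real.rpow_one]
    have h2 : B1 ^ (ν - 2) ≤ (q : ℝ) ^ (ν - 2) :=
      Real.rpow_le_rpow (Real.rpow_nonneg (by norm_num) _) hqB1 hν2'.le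
    have h3 : (q : ℝ) ^ ν = (q : ℝ) ^ (ν - 2) * (q : ℝ) ^ (2:ℝ) := by
      rw [← Real.rpow_add hqpos]; ring_nf
    have h4 : (0:ℝ) < (q : ℝ) ^ (2:ℝ) := Real.rpow_pos_of_pos hqpos _
    rw [h3]
    exact mul_le_mul_of_nonneg_right (by linarith [h1, h2]) h4.le
  have hqC : C * (q : ℝ) ^ μ ≤ (q : ℝ) ^ ν := by
    have h1 : C = B2 ^ (ν - μ) := by
      rw [hB2, ← Real.rpow_mul hCpos.le, one_div, inv_mul_cancel₀ hνμ.ne', Real.rpow_one]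
    have h2 : B2 ^ (ν - μ) ≤ (q : ℝ) ^ (ν - μ) :=
      Real.rpow_le_rpow (Real.rpow_nonneg hCpos.le _) hqB2 hνμ.le
    have h3 : (q : ℝ) ^ ν = (q : ℝ) ^ (ν - μ) * (q : ℝ) ^ μ := by
      rw [← Real.rpow_add hqpos]; ring_nf
    have h4 : (0:ℝ) < (q : ℝ) ^ μ := Real.rpow_pos_of_pos hqpos _
    rw [h3]
    exact mul_le_mul_of_nonneg_right (by linarith [h1, h2]) h4.le
  -- find the critical index n
  have hex : ∃ n, 2 * q ≤ Q μ (n + 1) := by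
    refine ⟨2 * q, ?_⟩
    have := Q_ge μ (2 * q + 1)
    omega
  classical
  obtain ⟨n, hfind, hmin⟩ : ∃ n, 2 * q ≤ Q μ (n + 1) ∧ ∀ m, m < n → ¬ 2 * q ≤ Q μ (m + 1) :=
    ⟨Nat.find hex, Nat.find_spec hex, fun m hm => Nat.find_min hex hm⟩
  have hn1 : 1 ≤ n := by
    rcases Nat.eq_zero_or_pos n with h0 | h; swap
    · exact h
    · exfalso
      have := hfind
      rw [h0, Q_one] at this
      omega
  have hQlt : Q μ n < 2 * q := by
    obtain ⟨m, hm⟩ := Nat.exists_eq_add_of_le hn1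
    have hmin' : ¬ 2 * q ≤ Q μ (m + 1) := hmin m (by omega)
    have hmn : m + 1 = n := by omega
    rw [hmn] at hmin'
    omega
  have hQltR : (Q μ n : ℝ) < 2 * q := by exact_mod_cast hQlt
  have hfindR : 2 * (q : ℝ) ≤ (Q μ (n + 1) : ℝ) := by exact_mod_cast hfind
  have hxpos := QR_pos μ n
  have hypos := QR_pos μ (n + 1)
  by_cases hpq : p * (Q μ n : ℤ) = (P μ n : ℤ) * q
  · -- p/q coincides with the convergent
    have heq : (p : ℝ) / (q : ℝ) = s μ n := by
      rw [s, div_eq_div_iff hqpos.ne' hxpos.ne']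
      exact_mod_cast hpq
    have h1 : c μ n / 2 ≤ |alpha μ - (p : ℝ) / (q : ℝ)| := by
      rw [heq]; exact alpha_approx_ge μ n
    -- Q (n+1) ≤ 2 (Q n)^(μ-1)
    obtain ⟨m, hm⟩ := Nat.exists_eq_add_of_le hn1
    have hmn : n = m + 1 := by omega
    have hy2 : (Q μ (n + 1) : ℝ) ≤ 2 * (Q μ n : ℝ) ^ (μ - 1) := by
      rw [hmn]
      exact Q_succ_le hμ m
    have hxμ : (Q μ n : ℝ) ^ (μ - 1) * (Q μ n : ℝ) = (Q μ n : ℝ) ^ μ := by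
      rw [rpow_Q_mul]; norm_num
    have hxμpos : (0:ℝ) < (Q μ n : ℝ) ^ μ := Real.rpow_pos_of_pos hxpos _
    have hxq : (Q μ n : ℝ) ^ μ ≤ 2 ^ μ * (q : ℝ) ^ μ := by
      have h2 : ((Q μ n : ℝ)) ^ μ ≤ (2 * (q:ℝ)) ^ μ :=
        Real.rpow_le_rpow hxpos.le hQltR.le (by linarith)
      rwa [Real.mul_rpow (by norm_num) hqpos.le] at h2
    -- c n / 2 = 1 / (2 x y) ≥ 1 / (4 x^μ) ≥ 1 / (C q^μ) ≥ 1 / q^ν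
    have hxy : 2 * ((Q μ n : ℝ) * (Q μ (n + 1) : ℝ)) ≤ C * (q : ℝ) ^ μ := by
      have step1 : 2 * ((Q μ n : ℝ) * (Q μ (n + 1) : ℝ))
          ≤ 4 * ((Q μ n : ℝ) ^ (μ - 1) * (Q μ n : ℝ)) := by
        nlinarith [hy2, hxpos]
      rw [hxμ] at step1
      calc 2 * ((Q μ n : ℝ) * (Q μ (n + 1) : ℝ)) ≤ 4 * (Q μ n : ℝ) ^ μ := step1
        _ ≤ 4 * (2 ^ μ * (q : ℝ) ^ μ) := by linarith
        _ = C * (q : ℝ) ^ μ := by rw [hC]; ring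
    have hfin : 1 / (q : ℝ) ^ ν ≤ c μ n / 2 := by
      have hCq : (0:ℝ) < C * (q : ℝ) ^ μ := by positivity
      have e1 : 1 / (q : ℝ) ^ ν ≤ 1 / (C * (q : ℝ) ^ μ) :=
        one_div_le_one_div_of_le hCq hqC
      have e2 : 1 / (C * (q : ℝ) ^ μ) ≤ 1 / (2 * ((Q μ n : ℝ) * (Q μ (n + 1) : ℝ))) :=
        one_div_le_one_div_of_le (by positivity) hxy
      have e3 : 1 / (2 * ((Q μ n : ℝ) * (Q μ (n + 1) : ℝ))) = c μ n / 2 := by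
        rw [c, one_div, one_div, mul_inv]; ring
      linarith
    linarith
  · -- p/q differs from the convergent
    have hnz : p * (Q μ n : ℤ) - (P μ n : ℤ) * q ≠ 0 := sub_ne_zero.mpr hpq
    have hnum : (1 : ℝ) ≤ |((p * (Q μ n : ℤ) - (P μ n : ℤ) * q : ℤ) : ℝ)| := by
      rw [← Int.cast_abs]
      exact_mod_cast Int.one_le_abs hnz
    have hdiffeq : (p : ℝ) / q - s μ n
        = ((p * (Q μ n : ℤ) - (P μ n : ℤ) * q : ℤ) : ℝ) / ((q : ℝ) * Q μ n) := by
      rw [s]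
      push_cast
      field_simp
    have hdiff : 1 / ((q : ℝ) * Q μ n) ≤ |(p : ℝ) / q - s μ n| := by
      rw [hdiffeq, abs_div, abs_of_pos (mul_pos hqpos hxpos)]
      gcongr
    have hcn : c μ n ≤ 1 / ((q : ℝ) * Q μ n * 2) := by
      rw [c]
      apply one_div_le_one_div_of_le (by positivity)
      nlinarith [hfindR, hxpos]
    have htri : 1 / ((q : ℝ) * Q μ n) - c μ n ≤ |alpha μ - (p : ℝ) / q| := by
      have habs2 : |alpha μ - s μ n| < c μ n := alpha_approx_lt μ n
      have h5 : |(p : ℝ) / q - s μ n| ≤ |alpha μ - (p : ℝ) / q| + |alpha μ - s μ n| := by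
        have := abs_sub ((p : ℝ) / q) (s μ n)
        calc |(p : ℝ) / q - s μ n|
            = |((p : ℝ) / q - alpha μ) + (alpha μ - s μ n)| := by rw [sub_add_sub_cancel]
          _ ≤ |(p : ℝ) / q - alpha μ| + |alpha μ - s μ n| := abs_add_le _ _
          _ = |alpha μ - (p : ℝ) / q| + |alpha μ - s μ n| := by rw [abs_sub_comm]
      linarith
    have hlow : 1 / (4 * (q : ℝ) ^ (2:ℝ)) ≤ |alpha μ - (p : ℝ) / q| := by
      have hq2R : (q : ℝ) ^ (2:ℝ) = (q : ℝ) * q := by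
        rw [show (2:ℝ) = ((2:ℕ):ℝ) by norm_num, Real.rpow_natCast]; ring
      have e1 : 1 / ((q : ℝ) * Q μ n) - c μ n ≥ 1 / ((q : ℝ) * Q μ n * 2) := by
        have : 1 / ((q : ℝ) * Q μ n) = 2 * (1 / ((q : ℝ) * Q μ n * 2)) := by
          field_simp
        linarith [hcn]
      have e2 : 1 / (4 * (q : ℝ) ^ (2:ℝ)) ≤ 1 / ((q : ℝ) * Q μ n * 2) := by
        apply one_div_le_one_div_of_le (by positivity)
        rw [hq2R]
        nlinarith [hQltR, hqpos, hxpos]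
      linarith
    have : 1 / (q : ℝ) ^ ν ≤ 1 / (4 * (q : ℝ) ^ (2:ℝ)) := by
      apply one_div_le_one_div_of_le (by positivity)
      linarith [hq4]
    linarith

lemma upper_bound (hμ : 2 ≤ μ) {ν : ℝ} (hν : μ < ν) :
    {pq : ℤ × ℤ | 1 ≤ pq.2 ∧
      |alpha μ - (pq.1 : ℝ) / (pq.2 : ℝ)| < 1 / (pq.2 : ℝ) ^ ν}.Finite := by
  obtain ⟨Q0, hQ02, hQ0⟩ := key_no_sol hμ hν
  obtain ⟨M, hM⟩ := exists_nat_ge ((Q0 : ℝ) * (|alpha μ| + 1))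
  apply Set.Finite.subset (Set.finite_Icc ((-(M : ℤ), (1 : ℤ))) (((M : ℤ), (Q0 : ℤ))))
  rintro ⟨p, q⟩ ⟨hq1, habs⟩
  simp only [Set.mem_setOf_eq] at hq1 habs
  have hqQ0 : q ≤ (Q0 : ℤ) := by
    by_contra hcon
    push_neg at hcon
    have hqn : (Q0 : ℕ) ≤ q.toNat := by omega
    have hcast : ((q.toNat : ℕ) : ℝ) = ((q : ℤ) : ℝ) := by
      have := Int.toNat_of_nonneg (by omega : (0:ℤ) ≤ q)
      exact_mod_cast congrArg (Int.cast : ℤ → ℝ) this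
    apply hQ0 p q.toNat hqn
    rw [hcast]
    exact habs
  have hqR1 : (1 : ℝ) ≤ ((q : ℤ) : ℝ) := by exact_mod_cast hq1
  have hone : 1 / ((q : ℤ) : ℝ) ^ ν ≤ 1 := by
    have h1 : (1:ℝ) = ((q : ℤ) : ℝ) ^ (0:ℝ) := (Real.rpow_zero _).symm
    have h2 : ((q : ℤ) : ℝ) ^ (0:ℝ) ≤ ((q : ℤ) : ℝ) ^ ν :=
      Real.rpow_le_rpow_of_exponent_le hqR1 (by linarith [lt_of_le_of_lt hμ hν])
    calc 1 / ((q : ℤ) : ℝ) ^ ν ≤ 1 / 1 := by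
          apply one_div_le_one_div_of_le one_pos
          rw [h1]
          exact h2
      _ = 1 := by norm_num
  have habs1 : |alpha μ - (p : ℝ) / (q : ℝ)| < 1 := lt_of_lt_of_le habs hone
  have hpq : |(p : ℝ) / (q : ℝ)| < |alpha μ| + 1 := by
    calc |(p : ℝ) / (q : ℝ)| = |((p : ℝ) / q - alpha μ) + alpha μ| := by rw [sub_add_cancel]
      _ ≤ |(p : ℝ) / q - alpha μ| + |alpha μ| := abs_add_le _ _
      _ = |alpha μ - (p : ℝ) / q| + |alpha μ| := by rw [abs_sub_comm]
      _ < |alpha μ| + 1 := by linarith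
  have hpbound : |(p : ℝ)| ≤ (M : ℝ) := by
    have hqpos : (0:ℝ) < ((q : ℤ) : ℝ) := by linarith
    have h1 : |(p : ℝ)| = |(p : ℝ) / (q : ℝ)| * ((q : ℤ) : ℝ) := by
      rw [abs_div, abs_of_pos hqpos]
      field_simp
    have hqQ0R : ((q : ℤ) : ℝ) ≤ (Q0 : ℝ) := by exact_mod_cast hqQ0
    have h2 : |(p : ℝ) / (q : ℝ)| * ((q : ℤ) : ℝ) ≤ (|alpha μ| + 1) * (Q0 : ℝ) := by
      apply mul_le_mul hpq.le hqQ0R hqpos.le (by positivity)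
    calc |(p : ℝ)| = |(p : ℝ) / (q : ℝ)| * ((q : ℤ) : ℝ) := h1
      _ ≤ (|alpha μ| + 1) * (Q0 : ℝ) := h2
      _ ≤ (M : ℝ) := by linarith [hM]
  have hpZ : |p| ≤ (M : ℤ) := by
    have h3 : ((|p| : ℤ) : ℝ) ≤ (M : ℝ) := by
      rw [Int.cast_abs]
      exact hpbound
    exact_mod_cast h3
  rw [Set.mem_Icc, Prod.mk_le_mk, Prod.mk_le_mk]
  exact ⟨⟨(abs_le.mp hpZ).1, hq1⟩, ⟨(abs_le.mp hpZ).2, hqQ0⟩⟩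

end IrrExp3

/-- For every `μ ∈ [2, ∞)` there is an irrational real `α` with irrationality exponent `μ`. -/
theorem stmt_3 (μ : ℝ) (hμ : 2 ≤ μ) :
    ∃ α : ℝ, Irrational α ∧ irrExp α = ENNReal.ofReal μ := by
  refine ⟨IrrExp3.alpha μ, IrrExp3.alpha_irrational μ, ?_⟩
  rw [irrExp]
  apply le_antisymm
  · apply sSup_le
    rintro m ⟨ν, rfl, hset⟩
    rcases le_or_gt ν μ with h | h
    · exact ENNReal.ofReal_le_ofReal h
    · exact absurd hset (IrrExp3.upper_bound hμ h).not_infinite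
  · rw [le_sSup_iff]
    intro b hb
    have hble : ∀ ν' : ℝ, ν' < μ → ENNReal.ofReal ν' ≤ b := fun ν' h =>
      hb ⟨ν', rfl, IrrExp3.lower_bound hμ h⟩
    by_cases hbt : b = ⊤
    · simp [hbt]
    · have h1 : ∀ ν' : ℝ, ν' < μ → ν' ≤ b.toReal := fun ν' h => by
        have := hble ν' h
        rwa [ENNReal.ofReal_le_iff_le_toReal hbt] at this
      have h2 : μ ≤ b.toReal := by
        by_contra hc
        push_neg at hc
        have h3 := h1 ((b.toReal + μ) / 2) (by linarith)
        linarith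
      calc ENNReal.ofReal μ ≤ ENNReal.ofReal b.toReal := ENNReal.ofReal_le_ofReal h2
        _ = b := ENNReal.ofReal_toReal hbt
end

section
/- Let v ∈ ℝ^k have ℚ-linearly independent components and let A ∈ SL_k(ℤ) satisfy A v = λ v with λ > 0. Then A is diagonalizable over ℂ. -/
/-!
If `q` is a rational polynomial with `q(λ) = 0`, then `q(A) v = q(λ) v = 0`, and since the
coordinates of `v` are `ℚ`-linearly independent, the rational matrix `q(A)` vanishes. The number
`λ` is a root of the characteristic polynomial of `A`, so it is algebraic and its minimal polynomial
annihilates `A`. That polynomial is irreducible over `ℚ`, hence separable, hence squarefree over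
`ℂ`, and a complex matrix annihilated by a squarefree polynomial is diagonalizable.
-/

open Polynomial Matrix

theorem Module.End.IsSemisimple.exists_basis_eigenvectors {K V ι : Type*} [Field K]
    [IsAlgClosed K] [AddCommGroup V] [Module K V] [FiniteDimensional K V] {f : End K V}
    (hf : f.IsSemisimple) (b₀ : Basis ι K V) :
    ∃ (b : Basis ι K V) (μ : ι → K), ∀ i, f (b i) = μ i • b i := by
  classical
  have hint := DirectSum.isInternal_submodule_of_iSupIndep_of_iSup_eq_top
    f.eigenspaces_iSupIndep hf.iSup_eigenspace_eq_top
  let b := hint.collectedBasis fun μ ↦ Module.finBasis K (f.eigenspace μ)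
  let e := b.indexEquiv b₀
  refine ⟨b.reindex e, fun i ↦ (e.symm i).1, fun i ↦ ?_⟩
  rw [Basis.reindex_apply]
  exact mem_eigenspace_iff.mp (hint.collectedBasis_mem _ _)

namespace Matrix

variable {n : Type*} [Fintype n]

theorem eq_zero_of_map_mulVec_eq_zero {m K L : Type*} [Field K] [Field L] [Algebra K L]
    {N : Matrix m n K} {v : n → L} (hv : LinearIndependent K v)
    (h : N.map (algebraMap K L) *ᵥ v = 0) : N = 0 := by
  ext i j
  refine Fintype.linearIndependent_iff.mp hv (N i) ?_ j
  simpa [mulVec, dotProduct, Algebra.smul_def] using congrFun h i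

variable [DecidableEq n]

def IsDiagonalizable {R : Type*} [CommRing R] (M : Matrix n n R) : Prop :=
  ∃ (P : Matrix n n R) (d : n → R), IsUnit P ∧ M = P * diagonal d * P⁻¹

theorem isDiagonalizable_of_basis_eigenvectors {R : Type*} [CommRing R] {M : Matrix n n R}
    (b : Module.Basis n R (n → R)) (d : n → R) (hb : ∀ i, M *ᵥ b i = d i • b i) :
    M.IsDiagonalizable := by
  let P := (Pi.basisFun R n).toMatrix b
  have : Invertible P := (Pi.basisFun R n).invertibleToMatrix b
  have hMP : M * P = P * diagonal d := by
    ext i j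
    rw [mul_diagonal]
    simpa [P, Module.Basis.toMatrix_apply, mul_apply, mulVec, dotProduct, mul_comm] using congrFun (hb j) i
  refine ⟨P, d, isUnit_of_invertible P, ?_⟩
  rw [← hMP, mul_inv_cancel_right_of_invertible]

theorem isDiagonalizable_of_squarefree_aeval_eq_zero {K : Type*} [Field K] [IsAlgClosed K]
    {M : Matrix n n K} {p : K[X]} (hp : Squarefree p) (h : aeval M p = 0) :
    M.IsDiagonalizable := by
  have hss : Module.End.IsSemisimple (toLinAlgEquiv' M : Module.End K (n → K)) :=
    Module.End.isSemisimple_of_squarefree_aeval_eq_zero hp <| by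
      rw [← AlgEquiv.coe_toAlgHom, aeval_algHom_apply, h, map_zero]
  obtain ⟨b, d, hb⟩ := hss.exists_basis_eigenvectors (Pi.basisFun K n)
  exact isDiagonalizable_of_basis_eigenvectors b d hb

theorem aeval_mulVec_of_mulVec_eq_smul {R : Type*} [CommRing R] {M : Matrix n n R} {v : n → R}
    {l : R} (h : M *ᵥ v = l • v) (p : R[X]) : aeval M p *ᵥ v = p.eval l • v := by
  have : toLinAlgEquiv' M v = l • v := h
  rw [← toLinAlgEquiv'_apply, ← AlgEquiv.coe_toAlgHom, ← aeval_algHom_apply]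
  exact Module.End.aeval_apply_of_mem_apply_eq_smul this

variable {K L : Type*} [Field K] [Field L] [Algebra K L]

theorem map_aeval (M : Matrix n n K) (q : K[X]) :
    (aeval M q).map (algebraMap K L) = aeval (M.map (algebraMap K L)) (q.map (algebraMap K L)) := by
  rw [aeval_map_algebraMap]
  exact (aeval_algHom_apply (Algebra.ofId K L).mapMatrix M q).symm

theorem isIntegral_of_map_mulVec_eq_smul {M : Matrix n n K} {v : n → L} {l : L} (hv : v ≠ 0)
    (h : M.map (algebraMap K L) *ᵥ v = l • v) : IsIntegral K l := by
  refine ⟨M.charpoly, M.charpoly_monic, ?_⟩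
  have := aeval_mulVec_of_mulVec_eq_smul h (M.charpoly.map (algebraMap K L))
  rw [← map_aeval, aeval_self_charpoly, Matrix.map_zero _ (map_zero _), zero_mulVec,
    eval_map_algebraMap] at this
  exact (smul_eq_zero.mp this.symm).resolve_right hv

theorem aeval_eq_zero_of_aeval_eigenvalue_eq_zero {M : Matrix n n K} {v : n → L} {l : L}
    (hv : LinearIndependent K v) (h : M.map (algebraMap K L) *ᵥ v = l • v) {q : K[X]}
    (hq : aeval l q = 0) : aeval M q = 0 := by
  refine eq_zero_of_map_mulVec_eq_zero hv ?_
  rw [map_aeval, aeval_mulVec_of_mulVec_eq_smul h, eval_map_algebraMap, hq, zero_smul]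

theorem isDiagonalizable_map_of_linearIndependent_eigenvector [Nonempty n] [PerfectField K]
    (F : Type*) [Field F] [IsAlgClosed F] [Algebra K F] {M : Matrix n n K} {v : n → L} {l : L}
    (hv : LinearIndependent K v) (h : M.map (algebraMap K L) *ᵥ v = l • v) :
    (M.map (algebraMap K F)).IsDiagonalizable := by
  have hl : IsIntegral K l :=
    isIntegral_of_map_mulVec_eq_smul (fun h0 ↦ hv.ne_zero (Classical.arbitrary n) (by simp [h0])) h
  have hsep := PerfectField.separable_of_irreducible (minpoly.irreducible hl)
  refine isDiagonalizable_of_squarefree_aeval_eq_zero (hsep.map (f := algebraMap K F)).squarefree ?_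
  rw [← map_aeval, aeval_eq_zero_of_aeval_eigenvalue_eq_zero hv h (minpoly.aeval K l),
    Matrix.map_zero _ (map_zero _)]

end Matrix

theorem stmt_7_general (k : ℕ) (v : Fin k → ℝ) (hv : LinearIndependent ℚ v)
    (A : Matrix (Fin k) (Fin k) ℤ)
    (l : ℝ)
    (heig : (A.map (Int.cast : ℤ → ℝ)).mulVec v = l • v) :
    ∃ (P : Matrix (Fin k) (Fin k) ℂ) (d : Fin k → ℂ), IsUnit P ∧
      A.map (Int.cast : ℤ → ℂ) = P * Matrix.diagonal d * P⁻¹ := by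
  rcases isEmpty_or_nonempty (Fin k) with hk | hk
  · exact ⟨1, 0, isUnit_one, Subsingleton.elim _ _⟩
  have h : (A.map (Int.cast : ℤ → ℚ)).map (algebraMap ℚ ℝ) *ᵥ v = l • v := by
    simpa [Matrix.map_map, Function.comp_def] using heig
  simpa [Matrix.IsDiagonalizable, Matrix.map_map, Function.comp_def] using
    isDiagonalizable_map_of_linearIndependent_eigenvector ℂ hv h

/-- Let `v ∈ ℝ^k` have `ℚ`-linearly independent components and `A ∈ SL_k(ℤ)` with
`A v = λ v`, `λ > 0`. Then `A` is diagonalizable over `ℂ`. -/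
theorem stmt_7 (k : ℕ) (v : Fin k → ℝ) (hv : LinearIndependent ℚ v)
    (A : Matrix (Fin k) (Fin k) ℤ) (hdet : A.det = 1)
    (l : ℝ) (hl : 0 < l)
    (heig : (A.map (Int.cast : ℤ → ℝ)).mulVec v = l • v) :
    ∃ (P : Matrix (Fin k) (Fin k) ℂ) (d : Fin k → ℂ), IsUnit P ∧
      A.map (Int.cast : ℤ → ℂ) = P * Matrix.diagonal d * P⁻¹ :=
  stmt_7_general k v hv A l heig
end

section
/- Let K be a real number field of degree k and B = (b_1,...,b_k) an integral basis of K. The map a ↦ transpose of the matrix of multiplication-by-a in the basis B is an injective group homomorphism from the group U_K^+ = {a ∈ O_K^× : a > 0, N_{K/ℚ}(a) = 1} into SL_k(ℤ), whose image is contained in G_v for v = (b_1,...,b_k) ∈ ℝ^k. -/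
/-!
The entries of the multiplication matrix of `a` are the coordinates of the `a * b j`, which are
integral and hence integer combinations of the integral basis; its determinant is the norm of `a`.
Transposition reverses products, but `K` is commutative, so `a ↦ Mᵀ` is still multiplicative.
Finally, column `i` of the matrix expresses `a * b i = ∑ j, M j i • b j`; embedding this identity
in `ℝ` says that `(b i)ᵢ` is an eigenvector of `Mᵀ` with eigenvalue `a > 0`.
-/

open scoped Matrix

namespace Algebra

section LeftMulMatrix

variable {ι R S : Type*} [Fintype ι] [DecidableEq ι] [CommRing R] [CommRing S] [Algebra R S]
  (b : Module.Basis ι R S)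

theorem leftMulMatrix_transpose_mul (x y : S) :
    (leftMulMatrix b (x * y))ᵀ = (leftMulMatrix b x)ᵀ * (leftMulMatrix b y)ᵀ := by
  rw [← Matrix.transpose_mul, ← map_mul, mul_comm]

theorem leftMulMatrix_transpose_injective :
    Function.Injective fun x : S => (leftMulMatrix b x)ᵀ :=
  Matrix.transpose_injective.comp (leftMulMatrix_injective b)

theorem leftMulMatrix_transpose_map_mulVec {L : Type*} [CommRing L] [Algebra R L]
    (φ : S →ₐ[R] L) (x : S) :
    (leftMulMatrix b x)ᵀ.map (algebraMap R L) *ᵥ (fun i => φ (b i)) = φ x • fun i => φ (b i) := by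
  ext i
  have hrepr : ∑ j, leftMulMatrix b x j i • b j = x * b i := by
    simp only [leftMulMatrix_eq_repr_mul, b.sum_repr]
  simp only [Matrix.mulVec, dotProduct, Matrix.map_apply, Matrix.transpose_apply,
    Pi.smul_apply, smul_eq_mul, ← map_mul, ← hrepr, map_sum, AlgHom.map_smul_of_tower]
  simp only [Algebra.smul_def]

end LeftMulMatrix

theorem exists_leftMulMatrix_eq_map_intCast {ι S : Type*} [Fintype ι] [DecidableEq ι]
    [CommRing S] [Algebra ℚ S] (b : Module.Basis ι ℚ S) (hint : ∀ i, IsIntegral ℤ (b i))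
    (hspan : ∀ x : S, IsIntegral ℤ x → x ∈ Submodule.span ℤ (Set.range b))
    {x : S} (hx : IsIntegral ℤ x) :
    ∃ N : Matrix ι ι ℤ, leftMulMatrix b x = N.map (Int.cast : ℤ → ℚ) := by
  have hentry : ∀ i j, ∃ n : ℤ, (n : ℚ) = leftMulMatrix b x i j := fun i j => by
    rw [leftMulMatrix_eq_repr_mul]
    exact (b.mem_span_iff_repr_mem ℤ _).mp (hspan _ (hx.mul (hint j))) i
  choose N hN using hentry
  exact ⟨Matrix.of N, Matrix.ext fun i j => (hN i j).symm⟩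

end Algebra

theorem Matrix.det_eq_one_of_map_intCast {ι : Type*} [Fintype ι] [DecidableEq ι]
    {N : Matrix ι ι ℤ} (h : (N.map (Int.cast : ℤ → ℚ)).det = 1) : N.det = 1 := by
  exact_mod_cast (Int.cast_det N).trans h

theorem stmt_11_general (k : ℕ) (K : IntermediateField ℚ ℝ)
    (b : Module.Basis (Fin k) ℚ K)
    (hint : ∀ i, IsIntegral ℤ (b i))
    (hspan : ∀ x : K, IsIntegral ℤ x → x ∈ Submodule.span ℤ (Set.range b))
    (a a' : K)
    (ha : IsIntegral ℤ a ∧ (∃ c : K, IsIntegral ℤ c ∧ a * c = 1) ∧ 0 < (a : ℝ) ∧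
      Algebra.norm ℚ a = 1) :
    -- the image is an integer matrix of determinant one ...
    (∃ N : Matrix (Fin k) (Fin k) ℤ, N.det = 1 ∧
        (LinearMap.toMatrix b b (Algebra.lmul ℚ K a)).transpose = N.map (Int.cast : ℤ → ℚ)) ∧
      -- ... the map is multiplicative ...
      (LinearMap.toMatrix b b (Algebra.lmul ℚ K (a * a'))).transpose =
        (LinearMap.toMatrix b b (Algebra.lmul ℚ K a)).transpose *
          (LinearMap.toMatrix b b (Algebra.lmul ℚ K a')).transpose ∧
      -- ... injective ...
      ((LinearMap.toMatrix b b (Algebra.lmul ℚ K a)).transpose =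
          (LinearMap.toMatrix b b (Algebra.lmul ℚ K a')).transpose → a = a') ∧
      -- ... and its image lies in `G_v` for `v = (b_1, ..., b_k)`.
      ∃ l : ℝ, 0 < l ∧
        ((LinearMap.toMatrix b b (Algebra.lmul ℚ K a)).transpose.map
            (Rat.cast : ℚ → ℝ)).mulVec (fun i => (b i : ℝ)) =
          l • fun i => (b i : ℝ) := by
  obtain ⟨ha_int, -, ha_pos, ha_norm⟩ := ha
  simp only [← Algebra.leftMulMatrix_apply]
  obtain ⟨N, hN⟩ := Algebra.exists_leftMulMatrix_eq_map_intCast b hint hspan ha_int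
  refine ⟨⟨Nᵀ, ?_, by rw [hN, Matrix.transpose_map]⟩, Algebra.leftMulMatrix_transpose_mul b a a',
    fun h => Algebra.leftMulMatrix_transpose_injective b h, a, ha_pos,
    Algebra.leftMulMatrix_transpose_map_mulVec b K.val a⟩
  rw [Matrix.det_transpose]
  exact Matrix.det_eq_one_of_map_intCast
    (by rw [← hN, ← Algebra.norm_eq_matrix_det b, ha_norm])

/-- Let `K ⊂ ℝ` be a number field of degree `k` with integral basis `b`. The map
`a ↦ (matrix of multiplication by a in basis b)ᵀ` is an injective group homomorphism
from `U_K^+ = {a ∈ O_K^× : a > 0, N(a) = 1}` into `SL_k(ℤ)` whose image lies in `G_v`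
for `v = (b_1, ..., b_k) ∈ ℝ^k`. -/
theorem stmt_11 (k : ℕ) (K : IntermediateField ℚ ℝ)
    [FiniteDimensional ℚ K] (hk : Module.finrank ℚ K = k)
    (b : Module.Basis (Fin k) ℚ K)
    (hint : ∀ i, IsIntegral ℤ (b i))
    (hspan : ∀ x : K, IsIntegral ℤ x → x ∈ Submodule.span ℤ (Set.range b))
    (a a' : K)
    (ha : IsIntegral ℤ a ∧ (∃ c : K, IsIntegral ℤ c ∧ a * c = 1) ∧ 0 < (a : ℝ) ∧
      Algebra.norm ℚ a = 1)
    (ha' : IsIntegral ℤ a' ∧ (∃ c : K, IsIntegral ℤ c ∧ a' * c = 1) ∧ 0 < (a' : ℝ) ∧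
      Algebra.norm ℚ a' = 1) :
    -- the image is an integer matrix of determinant one ...
    (∃ N : Matrix (Fin k) (Fin k) ℤ, N.det = 1 ∧
        (LinearMap.toMatrix b b (Algebra.lmul ℚ K a)).transpose = N.map (Int.cast : ℤ → ℚ)) ∧
      -- ... the map is multiplicative ...
      (LinearMap.toMatrix b b (Algebra.lmul ℚ K (a * a'))).transpose =
        (LinearMap.toMatrix b b (Algebra.lmul ℚ K a)).transpose *
          (LinearMap.toMatrix b b (Algebra.lmul ℚ K a')).transpose ∧
      -- ... injective ...
      ((LinearMap.toMatrix b b (Algebra.lmul ℚ K a)).transpose =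
          (LinearMap.toMatrix b b (Algebra.lmul ℚ K a')).transpose → a = a') ∧
      -- ... and its image lies in `G_v` for `v = (b_1, ..., b_k)`.
      ∃ l : ℝ, 0 < l ∧
        ((LinearMap.toMatrix b b (Algebra.lmul ℚ K a)).transpose.map
            (Rat.cast : ℚ → ℝ)).mulVec (fun i => (b i : ℝ)) =
          l • fun i => (b i : ℝ) :=
  stmt_11_general k K b hint hspan a a' ha
end

section
/- If (1, α_1, ..., α_{k-1}) is a ℚ-basis of a real number field K of degree k, then the vector α = (α_1,...,α_{k-1}) ∈ ℝ^{k-1} is badly approximable: there exists c > 0 such that max_i |α_i - p_i/q| ≥ c / q^{1 + 1/(k-1)} for all integers q ≥ 1 and all (p_1,...,p_{k-1}) ∈ ℤ^{k-1}. -/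
/-!
Write `θ = y₀ + ∑ yᵢ αᵢ` for a nonzero integer vector `y`. As an element of `K`, a common
denominator `d` of the basis makes `d θ` an algebraic integer, so `|N(θ)| ≥ d^(-k)`; every other
conjugate of `θ` is `O(max |yᵢ|)`, hence `|θ| ≫ (max |yᵢ|)^(-m)` (Liouville). Conversely, given
`q` and `p`, pigeonhole produces `0 < max |yᵢ| ≤ X ≈ q^(1/m)` with `q ∣ ∑ yᵢ pᵢ`, and then
`θ = ∑ yᵢ (αᵢ - pᵢ/q)` with `y₀ = -(∑ yᵢ pᵢ)/q` is at most `m X max |αᵢ - pᵢ/q|`. Comparing the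
two bounds gives `max |αᵢ - pᵢ/q| ≫ X^(-(m+1)) ≫ q^(-(1+1/m))`.
-/

open Finset Module

theorem norm_sum_zsmul_le {ι E : Type*} [Fintype ι] [SeminormedAddCommGroup E] (y : ι → ℤ)
    (v : ι → E) {Y : ℝ} (hY : ∀ l, |(y l : ℝ)| ≤ Y) : ‖∑ l, y l • v l‖ ≤ Y * ∑ l, ‖v l‖ := by
  rw [mul_sum]
  refine (norm_sum_le _ _).trans (sum_le_sum fun l _ => (norm_zsmul_le _ _).trans ?_)
  rw [Int.norm_eq_abs]
  exact mul_le_mul_of_nonneg_right (hY l) (norm_nonneg _)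

theorem one_le_of_ne_zero_of_abs_le {ι : Type*} {y : ι → ℤ} (hy : y ≠ 0) {Y : ℝ}
    (hY : ∀ l, |(y l : ℝ)| ≤ Y) : 1 ≤ Y := by
  obtain ⟨l, hl⟩ := Function.ne_iff.mp hy
  exact (by exact_mod_cast Int.one_le_abs hl : (1 : ℝ) ≤ |(y l : ℝ)|).trans (hY l)

theorem exists_pos_le_abs_norm_sum_zsmul {ι L : Type*} [Fintype ι] [Field L] [Algebra ℚ L]
    (b : Basis ι ℚ L) :
    ∃ c : ℚ, 0 < c ∧ ∀ y : ι → ℤ, y ≠ 0 → c ≤ |Algebra.norm ℚ (∑ l, y l • b l)| := by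
  classical
  have : FiniteDimensional ℚ L := b.finiteDimensional_of_finite
  obtain ⟨d, hd, hint⟩ := exists_integral_multiples ℤ ℚ (univ.image b)
  refine ⟨1 / |(d : ℚ)| ^ finrank ℚ L, by positivity, fun y hy => ?_⟩
  set θ := ∑ l, y l • b l
  have hθ : θ ≠ 0 := by
    contrapose! hy
    have := Fintype.linearIndependent_iff.mp b.linearIndependent (fun l => (y l : ℚ))
      (by simpa only [Int.cast_smul_eq_zsmul] using hy)
    ext l
    exact_mod_cast this l
  -- the norm of the algebraic integer `d • θ` is a nonzero rational integer
  have hdθ : IsIntegral ℤ (d • θ) := by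
    rw [smul_sum]
    refine IsIntegral.sum _ fun l _ => ?_
    rw [smul_comm]
    exact (hint _ (mem_image_of_mem b (mem_univ l))).zsmul _
  obtain ⟨z, hz⟩ := IsIntegrallyClosed.isIntegral_iff.mp (Algebra.isIntegral_norm ℚ hdθ)
  have hnorm : Algebra.norm ℚ (d • θ) = (d : ℚ) ^ finrank ℚ L * Algebra.norm ℚ θ := by
    rw [← Int.cast_smul_eq_zsmul ℚ, Algebra.smul_def, map_mul, Algebra.norm_algebraMap]
  have hz0 : z ≠ 0 := by
    rintro rfl
    simp_all [Algebra.norm_eq_zero_iff]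
  have : (1 : ℚ) ≤ |(d : ℚ)| ^ finrank ℚ L * |Algebra.norm ℚ θ| := by
    rw [← abs_pow, ← abs_mul, ← hnorm, ← hz, algebraMap_int_eq, eq_intCast, ← Int.cast_abs]
    exact_mod_cast Int.one_le_abs hz0
  rw [div_le_iff₀' (by positivity)]
  exact this

theorem exists_pos_div_pow_le_norm_algHom_sum_zsmul {ι L : Type*} [Fintype ι] [Field L]
    [Algebra ℚ L] (b : Basis ι ℚ L) (σ₀ : L →ₐ[ℚ] ℂ) :
    ∃ c : ℝ, 0 < c ∧ ∀ y : ι → ℤ, y ≠ 0 → ∀ Y : ℝ, (∀ l, |(y l : ℝ)| ≤ Y) →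
      c / Y ^ (Fintype.card ι - 1) ≤ ‖σ₀ (∑ l, y l • b l)‖ := by
  classical
  have : FiniteDimensional ℚ L := b.finiteDimensional_of_finite
  obtain ⟨c, hc, hnorm⟩ := exists_pos_le_abs_norm_sum_zsmul b
  obtain ⟨C, hC⟩ := Finite.exists_le fun σ : L →ₐ[ℚ] ℂ => ∑ l, ‖σ (b l)‖
  set C' := max C 1
  refine ⟨c / C' ^ (Fintype.card ι - 1), by positivity, fun y hy Y hY => ?_⟩
  set θ := ∑ l, y l • b l
  have hY0 : 0 < Y := zero_lt_one.trans_le (one_le_of_ne_zero_of_abs_le hy hY)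
  have hconj : ∀ σ : L →ₐ[ℚ] ℂ, ‖σ θ‖ ≤ C' * Y := fun σ => by
    simp only [θ, map_sum, map_zsmul]
    refine (norm_sum_zsmul_le y _ hY).trans ?_
    rw [mul_comm]
    gcongr
    exact (hC σ).trans (le_max_left _ _)
  have hcard : (univ.erase σ₀).card = Fintype.card ι - 1 := by
    rw [card_erase_of_mem (mem_univ _), card_univ, AlgHom.card, finrank_eq_card_basis b]
  have key : (c : ℝ) ≤ ‖σ₀ θ‖ * (C' * Y) ^ (Fintype.card ι - 1) := calc
    (c : ℝ) ≤ |(Algebra.norm ℚ θ : ℝ)| := by exact_mod_cast hnorm y hy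
    _ = ∏ σ : L →ₐ[ℚ] ℂ, ‖σ θ‖ := by
      rw [← Complex.norm_ratCast, ← norm_prod, ← Algebra.norm_eq_prod_embeddings ℚ ℂ θ]
      rfl
    _ = ‖σ₀ θ‖ * ∏ σ ∈ univ.erase σ₀, ‖σ θ‖ := (mul_prod_erase _ _ (mem_univ _)).symm
    _ ≤ ‖σ₀ θ‖ * (C' * Y) ^ (Fintype.card ι - 1) := by
      rw [← hcard, ← prod_const]
      gcongr with σ
      exact hconj σ
  rw [div_div, ← mul_pow, div_le_iff₀ (by positivity)]
  exact key

theorem IntermediateField.exists_basis_coe_eq {F E ι : Type*} [Field F] [Field E] [Algebra F E]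
    {K : IntermediateField F E} {v : ι → E} (hli : LinearIndependent F v)
    (hspan : Submodule.span F (Set.range v) = Subalgebra.toSubmodule K.toSubalgebra) :
    ∃ b : Basis ι F K, ∀ l, (b l : E) = v l :=
  ⟨(Basis.span hli).map (LinearEquiv.ofEq _ _ hspan), fun l => by
    rw [Basis.map_apply, Basis.span_apply]
    rfl⟩

theorem exists_pos_div_pow_le_abs_sum_mul {ι : Type*} [Fintype ι] {K : IntermediateField ℚ ℝ}
    {v : ι → ℝ} (hli : LinearIndependent ℚ v)
    (hspan : Submodule.span ℚ (Set.range v) = Subalgebra.toSubmodule K.toSubalgebra) :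
    ∃ c : ℝ, 0 < c ∧ ∀ y : ι → ℤ, y ≠ 0 → ∀ Y : ℝ, (∀ l, |(y l : ℝ)| ≤ Y) →
      c / Y ^ (Fintype.card ι - 1) ≤ |∑ l, y l * v l| := by
  obtain ⟨b, hb⟩ := K.exists_basis_coe_eq hli hspan
  obtain ⟨c, hc, hbound⟩ :=
    exists_pos_div_pow_le_norm_algHom_sum_zsmul b ((Complex.ofRealAm.restrictScalars ℚ).comp K.val)
  refine ⟨c, hc, fun y hy Y hY => (hbound y hy Y hY).trans_eq ?_⟩
  change ‖((↑(∑ l, y l • b l) : ℝ) : ℂ)‖ = _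
  rw [Complex.norm_real, Real.norm_eq_abs]
  push_cast [hb, zsmul_eq_mul]
  rfl

theorem exists_pos_div_pow_le_abs_add_sum_mul {m : ℕ} {α : Fin m → ℝ} {K : IntermediateField ℚ ℝ}
    (hli : LinearIndependent ℚ (Fin.cons (1 : ℝ) α))
    (hspan : Submodule.span ℚ (Set.range (Fin.cons (1 : ℝ) α)) =
      Subalgebra.toSubmodule K.toSubalgebra) :
    ∃ c : ℝ, 0 < c ∧ ∀ (x₀ : ℤ) (x : Fin m → ℤ), x ≠ 0 → ∀ X : ℝ, (∀ i, |(x i : ℝ)| ≤ X) →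
      c / X ^ m ≤ |x₀ + ∑ i, x i * α i| := by
  obtain ⟨c, hc, hbound⟩ := exists_pos_div_pow_le_abs_sum_mul hli hspan
  set A := ∑ i, |α i|
  refine ⟨min 1 (c / (1 + A) ^ m), by positivity, fun x₀ x hx X hX => ?_⟩
  have hX1 : 1 ≤ X := one_le_of_ne_zero_of_abs_le hx hX
  have hsum : |∑ i, x i * α i| ≤ X * A := by
    simpa only [zsmul_eq_mul, Real.norm_eq_abs] using norm_sum_zsmul_le x α hX
  by_cases hlarge : 1 ≤ |x₀ + ∑ i, x i * α i|
  · calc min 1 (c / (1 + A) ^ m) / X ^ m ≤ 1 / 1 :=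
          div_le_div₀ zero_le_one (min_le_left _ _) one_pos (one_le_pow₀ hX1)
      _ ≤ _ := by rwa [div_one]
  -- otherwise `x₀` is also `O(X)`, and the bound for the whole vector `(x₀, x)` applies
  have hx₀ : |(x₀ : ℝ)| ≤ (1 + A) * X := by
    have := abs_sub (x₀ + ∑ i, x i * α i : ℝ) (∑ i, x i * α i)
    rw [add_sub_cancel_right] at this
    nlinarith
  have hy : (Fin.cons x₀ x : Fin (m + 1) → ℤ) ≠ 0 := by
    contrapose! hx
    funext i
    simpa using congrFun hx i.succ
  have hyY : ∀ l, |((Fin.cons x₀ x : Fin (m + 1) → ℤ) l : ℝ)| ≤ (1 + A) * X := by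
    refine Fin.cases hx₀ fun i => (hX i).trans ?_
    nlinarith [show 0 ≤ A by positivity]
  have := hbound _ hy _ hyY
  simp only [Fintype.card_fin, add_tsub_cancel_right, Fin.sum_univ_succ, Fin.cons_zero,
    Fin.cons_succ, mul_one] at this
  calc min 1 (c / (1 + A) ^ m) / X ^ m ≤ c / (1 + A) ^ m / X ^ m := by
        gcongr
        exact min_le_right _ _
    _ = c / ((1 + A) * X) ^ m := by rw [div_div, mul_pow]
    _ ≤ _ := this

theorem exists_ne_zero_abs_le_dvd_sum_mul {ι : Type*} [Fintype ι] {q X : ℕ} [NeZero q]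
    (hq : q < (X + 1) ^ Fintype.card ι) (p : ι → ℤ) :
    ∃ y : ι → ℤ, y ≠ 0 ∧ (∀ i, |y i| ≤ X) ∧ (q : ℤ) ∣ ∑ i, y i * p i := by
  classical
  obtain ⟨a, a', hne, heq⟩ := Fintype.exists_ne_map_eq_of_card_lt
    (fun z : ι → Fin (X + 1) => ((∑ i, (z i : ℤ) * p i : ℤ) : ZMod q)) (by simpa using hq)
  refine ⟨fun i => a i - a' i, ?_, fun i => ?_, ?_⟩
  · contrapose! hne
    funext i
    have := congrFun hne i
    simp only [Pi.zero_apply, sub_eq_zero, Nat.cast_inj] at this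
    exact Fin.ext this
  · have := (a i).isLt
    have := (a' i).isLt
    rw [abs_le]
    dsimp only
    omega
  · rw [← ZMod.intCast_zmod_eq_zero_iff_dvd]
    simp only [sub_mul, sum_sub_distrib, Int.cast_sub]
    exact sub_eq_zero.mpr heq

theorem intCast_neg_add_sum_mul_eq_sum_zsmul {ι : Type*} [Fintype ι] (α : ι → ℝ) {y p : ι → ℤ}
    {q T : ℤ} (hq : q ≠ 0) (hT : ∑ i, y i * p i = q * T) :
    ((-T : ℤ) : ℝ) + ∑ i, y i * α i = ∑ i, y i • (α i - p i / q) := by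
  have hTq : (q : ℝ) * T = ∑ i, (y i : ℝ) * p i := by exact_mod_cast hT.symm
  simp only [zsmul_eq_mul, mul_sub, sum_sub_distrib, ← mul_div_assoc, ← sum_div, ← hTq,
    mul_div_cancel_left₀ _ (Int.cast_ne_zero.mpr hq : (q : ℝ) ≠ 0)]
  push_cast
  ring

theorem exists_nat_le_pow_and_pow_succ_le {m : ℕ} (hm : m ≠ 0) {q : ℝ} (hq : 1 ≤ q) :
    ∃ X : ℕ, q ≤ X ^ m ∧ (X : ℝ) ^ (m + 1) ≤ 2 ^ (m + 1) * q ^ ((1 : ℝ) + 1 / m) := by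
  set t := q ^ ((1 : ℝ) / m)
  have ht : 1 ≤ t := Real.one_le_rpow hq (by positivity)
  have htm : t ^ m = q := by
    simp only [t, one_div]
    exact Real.rpow_inv_natCast_pow (by positivity) hm
  refine ⟨⌈t⌉₊, htm ▸ pow_le_pow_left₀ (by positivity) (Nat.le_ceil t) m, ?_⟩
  calc (⌈t⌉₊ : ℝ) ^ (m + 1) ≤ (2 * t) ^ (m + 1) := by
        gcongr
        exact Nat.ceil_le_two_mul (by linarith)
    _ = 2 ^ (m + 1) * (q * t) := by rw [mul_pow, pow_succ t, htm]
    _ = 2 ^ (m + 1) * q ^ ((1 : ℝ) + 1 / m) := by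
        rw [Real.rpow_add (by positivity), Real.rpow_one]

/-- If `(1, α_1, ..., α_m)` is a `ℚ`-basis of a real number field `K` (of degree
`k = m + 1`), then `α = (α_1, ..., α_m)` is badly approximable: there is `c > 0` with
`max_i |α_i - p_i/q| ≥ c / q^{1 + 1/m}` for all integers `q ≥ 1` and all `p ∈ ℤ^m`. -/
theorem stmt_12 (m : ℕ) (hm : 1 ≤ m) (α : Fin m → ℝ)
    (K : IntermediateField ℚ ℝ)
    (hli : LinearIndependent ℚ (Fin.cons (1 : ℝ) α))
    (hspan : Submodule.span ℚ (Set.range (Fin.cons (1 : ℝ) α)) =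
      Subalgebra.toSubmodule K.toSubalgebra) :
    ∃ c : ℝ, 0 < c ∧ ∀ q : ℤ, 1 ≤ q → ∀ p : Fin m → ℤ, ∃ i,
      c / (q : ℝ) ^ ((1 : ℝ) + 1 / m) ≤ |α i - (p i : ℝ) / (q : ℝ)| := by
  obtain ⟨c, hc, hform⟩ := exists_pos_div_pow_le_abs_add_sum_mul hli hspan
  refine ⟨c / (m * 2 ^ (m + 1)), by positivity, fun q hq p => ?_⟩
  lift q to ℕ using by omega
  have hq₁ : (1 : ℝ) ≤ q := by exact_mod_cast hq
  have : NeZero q := ⟨by omega⟩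
  obtain ⟨X, hqX, hXq⟩ := exists_nat_le_pow_and_pow_succ_le (by omega : m ≠ 0) hq₁
  have hqX' : q < (X + 1) ^ Fintype.card (Fin m) := by
    rw [Fintype.card_fin]
    exact (show q ≤ X ^ m by exact_mod_cast hqX).trans_lt
      (Nat.pow_lt_pow_left X.lt_succ_self (by omega))
  obtain ⟨y, hy, hyX, T, hT⟩ := exists_ne_zero_abs_le_dvd_sum_mul hqX' p
  have hyX' : ∀ j, |(y j : ℝ)| ≤ X := fun j => by exact_mod_cast hyX j
  obtain ⟨i, -, hi⟩ := exists_max_image univ (fun j => |α j - p j / q|) ⟨⟨0, hm⟩, mem_univ _⟩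
  refine ⟨i, ?_⟩
  set δ := |α i - p i / q|
  have hsmall : |((-T : ℤ) : ℝ) + ∑ j, y j * α j| ≤ X * (m * δ) := by
    rw [intCast_neg_add_sum_mul_eq_sum_zsmul α (by omega) hT, ← Real.norm_eq_abs]
    refine (norm_sum_zsmul_le y _ hyX').trans (mul_le_mul_of_nonneg_left ?_ (by positivity))
    simpa using sum_le_card_nsmul univ _ δ fun j _ => hi j (mem_univ j)
  have hX : (0 : ℝ) < X ^ m := zero_lt_one.trans_le (hq₁.trans hqX)
  have := (hform _ y hy X hyX').trans hsmall
  rw [div_le_iff₀ hX] at this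
  rw [div_div, div_le_iff₀ (by positivity)]
  calc c ≤ X * (m * δ) * X ^ m := this
    _ = m * δ * X ^ (m + 1) := by ring
    _ ≤ m * δ * (2 ^ (m + 1) * (q : ℝ) ^ ((1 : ℝ) + 1 / m)) := by gcongr
    _ = δ * (m * 2 ^ (m + 1) * (q : ℝ) ^ ((1 : ℝ) + 1 / m)) := by ring
end

section
/- Let T² = ℝ²/ℤ² with the flat metrics g_ε obtained from the standard metric by scaling by ε² in the direction of the line D spanned by (1, α) (α irrational) and leaving the orthogonal direction unchanged. Then liminf_{ε→0} ln(diam(T², g_ε))/ln(ε) = 1/μ(α), where μ(α) is the irrationality exponent of α. -/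
open scoped ENNReal

/-- The norm on `ℝ²` obtained from the standard Euclidean metric by scaling by `ε²`
the component along the line `D = ℝ·(1, α)` and keeping the orthogonal component. -/
noncomputable def normEps (α ε : ℝ) (x : ℝ × ℝ) : ℝ :=
  Real.sqrt ((ε ^ 2 * (x.1 + α * x.2) ^ 2 + (α * x.1 - x.2) ^ 2) / (1 + α ^ 2))

/-- The diameter of the flat torus `(T² = ℝ²/ℤ², g_ε)`: the supremum over points of the
distance to the lattice `ℤ²` (covering radius). -/
noncomputable def diamEps (α ε : ℝ) : ℝ :=
  sSup {r : ℝ | ∃ x : ℝ × ℝ,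
    r = sInf {s : ℝ | ∃ p q : ℤ, s = normEps α ε (x.1 - p, x.2 - q)}}

/-!
`normEps α ε` is a Euclidean norm on `ℝ²` whose area form is `ε • det`, so `diamEps α ε` is the
covering radius of a lattice of covolume `ε`. Rounding coordinates in a reduced basis `v, w`
gives `diamEps ≤ ‖v‖ + ε / ‖v‖` for every primitive `v ∈ ℤ²`, and the point halfway between two
consecutive lattice lines parallel to a nonzero `v ∈ ℤ²` gives `ε / (2 ‖v‖) ≤ diamEps`.
Up to constants, `‖(q, p)‖ ≈ ε |q| + |α q - p|`.

If `|α q - p| ≥ c q ^ (1 - ν)` for all `q ≥ 1` (true for every `ν > μ(α)`), every nonzero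
lattice vector has length `≳ ε ^ (1 - 1/ν)`, while Dirichlet's theorem provides a primitive one
of length `≲ √ε`; hence `diamEps ≲ ε ^ (1/ν)`. If `|α q - p| ≤ q ^ (1 - ν)` for infinitely many
`q` (true for every `ν < μ(α)`), then `ε = q ^ (-ν)` and `v = (q, p)` give
`diamEps ≳ 1 / q = ε ^ (1/ν)`. Comparing logarithms yields the `liminf`.
-/

open Filter Topology

namespace AdiabaticTorus

section LogRatio

variable {D : ℝ → ℝ} {c s K : ℝ}

lemma tendsto_log_const_div_log (K : ℝ) :
    Tendsto (fun ε => Real.log K / Real.log ε) (𝓝[>] 0) (𝓝 0) :=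
  tendsto_const_nhds.div_atBot Real.tendsto_log_nhdsGT_zero

lemma log_mul_rpow (hK : 0 < K) {ε : ℝ} (hε : 0 < ε) :
    Real.log (K * ε ^ s) = Real.log K + s * Real.log ε := by
  rw [Real.log_mul hK.ne' (Real.rpow_pos_of_pos hε s).ne', Real.log_rpow hε]

lemma eventually_le_log_div_log (hs : c < s) (hK : 0 < K)
    (h : ∀ᶠ ε in 𝓝[>] 0, 0 < D ε ∧ D ε ≤ K * ε ^ s) :
    ∀ᶠ ε in 𝓝[>] 0, c ≤ Real.log (D ε) / Real.log ε := by
  have hlim := (tendsto_log_const_div_log K).eventually (lt_mem_nhds (sub_neg.2 hs))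
  filter_upwards [h, hlim, Ioo_mem_nhdsGT one_pos] with ε ⟨hD, hDK⟩ hKε ⟨hε, hε1⟩
  have hlog : Real.log ε < 0 := Real.log_neg hε hε1
  have : Real.log (D ε) ≤ Real.log K + s * Real.log ε :=
    (Real.log_le_log hD hDK).trans_eq (log_mul_rpow hK hε)
  rw [le_div_iff_of_neg hlog]
  rw [lt_div_iff_of_neg hlog] at hKε
  linarith

lemma frequently_log_div_log_le (hs : s < c) (hK : 0 < K)
    (h : ∃ᶠ ε in 𝓝[>] 0, K * ε ^ s ≤ D ε) :
    ∃ᶠ ε in 𝓝[>] 0, Real.log (D ε) / Real.log ε ≤ c := by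
  have hlim := (tendsto_log_const_div_log K).eventually (gt_mem_nhds (sub_pos.2 hs))
  refine (h.and_eventually (hlim.and (Ioo_mem_nhdsGT one_pos))).mono ?_
  rintro ε ⟨hDK, hKε, hε, hε1⟩
  have hlog : Real.log ε < 0 := Real.log_neg hε hε1
  have : Real.log K + s * Real.log ε ≤ Real.log (D ε) :=
    (log_mul_rpow hK hε).symm.trans_le
      (Real.log_le_log (mul_pos hK (Real.rpow_pos_of_pos hε s)) hDK)
  rw [div_le_iff_of_neg hlog]
  rw [div_lt_iff_of_neg hlog] at hKε
  linarith

theorem liminf_log_div_log_eq {L : ℝ}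
    (hup : ∀ c < L, ∃ s > c, ∃ K > 0, ∀ᶠ ε in 𝓝[>] 0, 0 < D ε ∧ D ε ≤ K * ε ^ s)
    (hlow : ∀ c > L, ∃ s < c, ∃ K > 0, ∃ᶠ ε in 𝓝[>] 0, K * ε ^ s ≤ D ε) :
    liminf (fun ε => Real.log (D ε) / Real.log ε) (𝓝[>] 0) = L := by
  have hev : ∀ c < L, ∀ᶠ ε in 𝓝[>] 0, c ≤ Real.log (D ε) / Real.log ε := fun c hc => by
    obtain ⟨s, hs, K, hK, h⟩ := hup c hc
    exact eventually_le_log_div_log hs hK h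
  have hfreq : ∀ c > L, ∃ᶠ ε in 𝓝[>] 0, Real.log (D ε) / Real.log ε ≤ c := fun c hc => by
    obtain ⟨s, hs, K, hK, h⟩ := hlow c hc
    exact frequently_log_div_log_le hs hK h
  have hbdd := isBoundedUnder_of_eventually_ge (hev (L - 1) (by linarith))
  have hcobdd := IsCoboundedUnder.of_frequently_le (hfreq (L + 1) (by linarith))
  refine le_antisymm (le_of_forall_gt_imp_ge_of_dense fun c hc => ?_)
    (le_of_forall_lt_imp_le_of_dense fun c hc => ?_)
  · exact liminf_le_of_frequently_le (hfreq c hc) hbdd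
  · exact le_liminf_of_le hcobdd (hev c hc)

end LogRatio

section Norm

variable {α ε : ℝ}

noncomputable def innerEps (α ε : ℝ) (x y : ℝ × ℝ) : ℝ :=
  (ε ^ 2 * (x.1 + α * x.2) * (y.1 + α * y.2) + (α * x.1 - x.2) * (α * y.1 - y.2)) / (1 + α ^ 2)

def det (x y : ℝ × ℝ) : ℝ := x.1 * y.2 - x.2 * y.1

lemma normEps_nonneg (x : ℝ × ℝ) : 0 ≤ normEps α ε x := Real.sqrt_nonneg _

lemma normEps_sq (x : ℝ × ℝ) : normEps α ε x ^ 2 = innerEps α ε x x := by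
  rw [normEps, Real.sq_sqrt (by positivity), innerEps]
  ring

lemma normEps_sq_mul (x : ℝ × ℝ) :
    normEps α ε x ^ 2 * (1 + α ^ 2) = ε ^ 2 * (x.1 + α * x.2) ^ 2 + (α * x.1 - x.2) ^ 2 := by
  rw [normEps, Real.sq_sqrt (by positivity), div_mul_cancel₀ _ (by positivity)]

lemma innerEps_sq_add_sq_mul_det_sq (x y : ℝ × ℝ) :
    innerEps α ε x y ^ 2 + ε ^ 2 * det x y ^ 2 = normEps α ε x ^ 2 * normEps α ε y ^ 2 := by
  rw [normEps_sq, normEps_sq, innerEps, innerEps, innerEps, det]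
  field_simp
  ring

lemma abs_innerEps_le (x y : ℝ × ℝ) :
    |innerEps α ε x y| ≤ normEps α ε x * normEps α ε y :=
  abs_le_of_sq_le_sq (by nlinarith [innerEps_sq_add_sq_mul_det_sq (α := α) (ε := ε) x y])
    (mul_nonneg (normEps_nonneg x) (normEps_nonneg y))

lemma mul_abs_det_le (hε : 0 ≤ ε) (x y : ℝ × ℝ) :
    ε * |det x y| ≤ normEps α ε x * normEps α ε y := by
  calc ε * |det x y| = |ε * det x y| := by rw [abs_mul, abs_of_nonneg hε]
    _ ≤ _ := abs_le_of_sq_le_sq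
      (by nlinarith [innerEps_sq_add_sq_mul_det_sq (α := α) (ε := ε) x y])
      (mul_nonneg (normEps_nonneg x) (normEps_nonneg y))

lemma normEps_add_le (x y : ℝ × ℝ) :
    normEps α ε (x + y) ≤ normEps α ε x + normEps α ε y := by
  have hsq : normEps α ε (x + y) ^ 2
      = normEps α ε x ^ 2 + 2 * innerEps α ε x y + normEps α ε y ^ 2 := by
    simp only [normEps_sq, innerEps, Prod.fst_add, Prod.snd_add]
    ring
  refine le_of_pow_le_pow_left₀ two_ne_zero
    (add_nonneg (normEps_nonneg x) (normEps_nonneg y)) ?_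
  nlinarith [le_abs_self (innerEps α ε x y), abs_innerEps_le (α := α) (ε := ε) x y]

lemma normEps_smul (t : ℝ) (x : ℝ × ℝ) : normEps α ε (t • x) = |t| * normEps α ε x := by
  rw [← Real.sqrt_sq_eq_abs, normEps, normEps, ← Real.sqrt_mul (sq_nonneg t)]
  congr 1
  simp only [Prod.smul_fst, Prod.smul_snd, smul_eq_mul]
  ring

lemma normEps_neg (x : ℝ × ℝ) : normEps α ε (-x) = normEps α ε x := by
  rw [← neg_one_smul ℝ x, normEps_smul, abs_neg, abs_one, one_mul]

lemma normEps_pos (hε : 0 < ε) {x : ℝ × ℝ} (hx : x ≠ 0) : 0 < normEps α ε x := by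
  refine (normEps_nonneg x).lt_of_ne fun h => hx ?_
  have hdet : ∀ y, det x y = 0 := fun y => by
    have := mul_abs_det_le (α := α) hε.le x y
    rw [← h, zero_mul] at this
    exact abs_eq_zero.1 (le_antisymm ((mul_nonpos_iff_pos_imp_nonpos.1 this).1 hε) (abs_nonneg _))
  have h1 := hdet (0, 1)
  have h2 := hdet (1, 0)
  simp only [det, mul_one, mul_zero, sub_zero, zero_sub, neg_eq_zero] at h1 h2
  exact Prod.ext h1 h2

variable (hε0 : 0 ≤ ε) (hε1 : ε ≤ 1)
include hε0 hε1

lemma normEps_le_mul_add (x : ℝ × ℝ) :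
    normEps α ε x ≤ 2 * (1 + α ^ 2) * (ε * |x.1| + |α * x.1 - x.2|) := by
  have hN := normEps_sq_mul (α := α) (ε := ε) x
  set S := 1 + α ^ 2
  set w := α * x.1 - x.2
  have hS : 1 ≤ S := by nlinarith [sq_nonneg α]
  have hu : x.1 + α * x.2 = S * x.1 - α * w := by ring
  have hε2 : ε ^ 2 ≤ 1 := by nlinarith
  have hsum : ε ^ 2 * x.1 ^ 2 + w ^ 2 ≤ (ε * |x.1| + |w|) ^ 2 := by
    nlinarith [sq_abs x.1, sq_abs w, mul_nonneg (mul_nonneg hε0 (abs_nonneg x.1)) (abs_nonneg w)]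
  have h1 : ε ^ 2 * (S * x.1 - α * w) ^ 2 ≤ 2 * S ^ 2 * (ε ^ 2 * x.1 ^ 2) + 2 * α ^ 2 * w ^ 2 := by
    nlinarith [sq_nonneg (S * x.1 + α * w), mul_nonneg (sub_nonneg.2 hε2) (sq_nonneg (α * w)),
      mul_nonneg (sq_nonneg ε) (sq_nonneg (S * x.1 + α * w))]
  have h2 : normEps α ε x ^ 2 * S ≤ 2 * S ^ 2 * (ε ^ 2 * x.1 ^ 2 + w ^ 2) := by
    have hS2 : 2 * α ^ 2 + 1 ≤ 2 * S ^ 2 := by nlinarith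
    rw [hN, hu]
    nlinarith [mul_le_mul_of_nonneg_right hS2 (sq_nonneg w)]
  have h3 : normEps α ε x ^ 2 ≤ 2 * S * (ε * |x.1| + |w|) ^ 2 := by
    have : normEps α ε x ^ 2 * S ≤ (2 * S * (ε * |x.1| + |w|) ^ 2) * S := by
      nlinarith [mul_le_mul_of_nonneg_left hsum (by positivity : (0 : ℝ) ≤ 2 * S ^ 2)]
    exact le_of_mul_le_mul_right this (by positivity)
  refine le_of_pow_le_pow_left₀ two_ne_zero (by positivity) ?_
  nlinarith [sq_nonneg (ε * |x.1| + |w|)]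

lemma mul_add_le_normEps (x : ℝ × ℝ) :
    ε * |x.1| + |α * x.1 - x.2| ≤ 3 * (1 + α ^ 2) * normEps α ε x := by
  have hN := normEps_sq_mul (α := α) (ε := ε) x
  set S := 1 + α ^ 2
  set u := x.1 + α * x.2
  set w := α * x.1 - x.2
  have hS : 1 ≤ S := by nlinarith [sq_nonneg α]
  have hx : S * x.1 = u + α * w := by ring
  have hε2 : ε ^ 2 ≤ 1 := by nlinarith
  have hfst : S ^ 2 * (ε ^ 2 * x.1 ^ 2) ≤ S ^ 2 * (2 * normEps α ε x ^ 2) := by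
    have : (S * x.1) ^ 2 ≤ 2 * u ^ 2 + 2 * α ^ 2 * w ^ 2 := by
      rw [hx]; nlinarith [sq_nonneg (u - α * w)]
    nlinarith [mul_le_mul_of_nonneg_left this (sq_nonneg ε),
      mul_nonneg (sub_nonneg.2 hε2) (mul_nonneg (sq_nonneg α) (sq_nonneg w)), sq_nonneg α,
      mul_nonneg (sq_nonneg α) (sq_nonneg (ε * u))]
  have hfst' : ε ^ 2 * x.1 ^ 2 ≤ 2 * normEps α ε x ^ 2 :=
    le_of_mul_le_mul_left hfst (by positivity)
  have hw : w ^ 2 ≤ S * normEps α ε x ^ 2 := by nlinarith [sq_nonneg (ε * u)]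
  refine le_of_pow_le_pow_left₀ two_ne_zero
    (mul_nonneg (by positivity) (normEps_nonneg x)) ?_
  nlinarith [sq_abs x.1, sq_abs w, sq_nonneg (ε * |x.1| - |w|),
    mul_le_mul_of_nonneg_right hS (sq_nonneg (normEps α ε x)),
    mul_le_mul_of_nonneg_right (mul_le_mul hS hS zero_le_one (by positivity))
      (sq_nonneg (normEps α ε x))]

end Norm

section Lattice

variable {α ε : ℝ}

noncomputable def latticeDist (α ε : ℝ) (x : ℝ × ℝ) : ℝ :=
  sInf {s : ℝ | ∃ p q : ℤ, s = normEps α ε (x.1 - p, x.2 - q)}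

lemma latticeDist_le (x : ℝ × ℝ) (p q : ℤ) :
    latticeDist α ε x ≤ normEps α ε (x.1 - p, x.2 - q) :=
  csInf_le ⟨0, by rintro _ ⟨p, q, rfl⟩; exact normEps_nonneg _⟩ ⟨p, q, rfl⟩

lemma le_latticeDist (x : ℝ × ℝ) {r : ℝ} (h : ∀ p q : ℤ, r ≤ normEps α ε (x.1 - p, x.2 - q)) :
    r ≤ latticeDist α ε x :=
  le_csInf ⟨_, 0, 0, rfl⟩ (by rintro _ ⟨p, q, rfl⟩; exact h p q)

/-- Round the coordinates of `x` in the lattice basis `(a, b), (c, d)`. -/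
lemma latticeDist_le_of_det_eq_one {a b c d : ℤ} (h : a * d - b * c = 1) (x : ℝ × ℝ) :
    latticeDist α ε x ≤ (normEps α ε (a, b) + normEps α ε (c, d)) / 2 := by
  have h' : (a : ℝ) * d - b * c = 1 := by exact_mod_cast h
  set t := x.1 * d - x.2 * c
  set u := x.2 * a - x.1 * b
  have hx : (x.1 - ((round t * a + round u * c : ℤ) : ℝ),
      x.2 - ((round t * b + round u * d : ℤ) : ℝ))
      = (t - round t) • ((a : ℝ), (b : ℝ)) + (u - round u) • ((c : ℝ), (d : ℝ)) := by
    ext <;> simp only [Prod.fst_add, Prod.snd_add, Prod.smul_fst, Prod.smul_snd, smul_eq_mul,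
      t, u] <;> push_cast
    · linear_combination (-x.1) * h'
    · linear_combination (-x.2) * h'
  have ht := abs_sub_round t
  have hu := abs_sub_round u
  calc latticeDist α ε x ≤ _ := latticeDist_le x _ _
    _ ≤ |t - round t| * normEps α ε (a, b) + |u - round u| * normEps α ε (c, d) := by
      rw [hx, ← normEps_smul, ← normEps_smul]
      exact normEps_add_le _ _
    _ ≤ _ := by nlinarith [normEps_nonneg (α := α) (ε := ε) ((a : ℝ), (b : ℝ)),
      normEps_nonneg (α := α) (ε := ε) ((c : ℝ), (d : ℝ))]

lemma diamEps_le {r : ℝ} (h : ∀ x, latticeDist α ε x ≤ r) : diamEps α ε ≤ r :=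
  csSup_le ⟨_, 0, rfl⟩ (by rintro _ ⟨x, rfl⟩; exact h x)

lemma latticeDist_le_diamEps (x : ℝ × ℝ) : latticeDist α ε x ≤ diamEps α ε :=
  le_csSup ⟨_, by
    rintro _ ⟨y, rfl⟩
    exact latticeDist_le_of_det_eq_one (a := 1) (b := 0) (c := 0) (d := 1) (by norm_num) y⟩
    ⟨x, rfl⟩

lemma diamEps_le_one (hε0 : 0 ≤ ε) (hε1 : ε ≤ 1) : diamEps α ε ≤ 1 := by
  have hS : 0 < 1 + α ^ 2 := by positivity
  have hε2 : ε ^ 2 ≤ 1 := by nlinarith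
  have h1 : normEps α ε (((1 : ℤ) : ℝ), ((0 : ℤ) : ℝ)) ≤ 1 := by
    refine Real.sqrt_le_one.mpr ((div_le_one hS).2 ?_)
    push_cast; nlinarith
  have h2 : normEps α ε (((0 : ℤ) : ℝ), ((1 : ℤ) : ℝ)) ≤ 1 := by
    refine Real.sqrt_le_one.mpr ((div_le_one hS).2 ?_)
    push_cast; nlinarith [sq_nonneg α]
  refine diamEps_le fun x =>
    (latticeDist_le_of_det_eq_one (a := 1) (b := 0) (c := 0) (d := 1) (by norm_num) x).trans ?_
  rw [div_le_one two_pos]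
  exact (add_le_add h1 h2).trans_eq one_add_one_eq_two

/-- The point `x` has `det (a, b) x = 1/2`, so it lies halfway between two consecutive lattice
lines parallel to `(a, b)`, which are `ε / ‖(a, b)‖` apart. -/
lemma div_le_diamEps (hε : 0 < ε) {a b : ℤ} (hab : ((a : ℝ), (b : ℝ)) ≠ 0) :
    ε / (2 * normEps α ε (a, b)) ≤ diamEps α ε := by
  have hn : 0 < (a : ℝ) ^ 2 + (b : ℝ) ^ 2 := by
    rcases ne_or_eq (a : ℝ) 0 with ha | ha
    · positivity
    · have hb : (b : ℝ) ≠ 0 := fun hb => hab (Prod.ext ha hb)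
      positivity
  have hL := normEps_pos (α := α) hε hab
  set x : ℝ × ℝ := (-b / (2 * (a ^ 2 + b ^ 2)), a / (2 * (a ^ 2 + b ^ 2)))
  refine le_trans ?_ (latticeDist_le_diamEps x)
  refine le_latticeDist x fun p q => ?_
  have hdet : det ((a : ℝ), (b : ℝ)) (x.1 - p, x.2 - q) = 1 / 2 - ((a * q - b * p : ℤ) : ℝ) := by
    simp only [det, x]
    push_cast
    field_simp
    ring
  have hhalf : 1 / 2 ≤ |det ((a : ℝ), (b : ℝ)) (x.1 - p, x.2 - q)| := by
    rw [hdet]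
    rcases le_or_gt (a * q - b * p) 0 with hk | hk
    · have : ((a * q - b * p : ℤ) : ℝ) ≤ 0 := by exact_mod_cast hk
      rw [abs_of_nonneg (by linarith)]; linarith
    · have : (1 : ℝ) ≤ ((a * q - b * p : ℤ) : ℝ) := by exact_mod_cast hk
      rw [abs_of_neg (by linarith)]; linarith
  rw [div_le_iff₀ (by positivity)]
  nlinarith [mul_abs_det_le (α := α) hε.le ((a : ℝ), (b : ℝ)) (x.1 - p, x.2 - q)]

lemma intCast_prod_ne_zero_of_isCoprime {a b : ℤ} (hab : IsCoprime a b) :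
    ((a : ℝ), (b : ℝ)) ≠ 0 := fun h0 => by
  have ha : a = 0 := by simpa using congrArg Prod.fst h0
  have hb : b = 0 := by simpa using congrArg Prod.snd h0
  exact not_isCoprime_zero_zero (ha ▸ hb ▸ hab)

/-- One step of Gauss reduction: shorten the second vector of a lattice basis. -/
lemma exists_det_eq_one_normEps_le (hε : 0 < ε) {a b : ℤ} (hab : IsCoprime a b) :
    ∃ c d : ℤ, a * d - b * c = 1 ∧
      normEps α ε (c, d) ≤ normEps α ε (a, b) / 2 + ε / normEps α ε (a, b) := by
  have hL := normEps_pos (α := α) hε (intCast_prod_ne_zero_of_isCoprime hab)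
  obtain ⟨u, v, huv⟩ := hab
  have huv' : (u : ℝ) * a + v * b = 1 := by exact_mod_cast huv
  set L := normEps α ε (a, b)
  set κ := innerEps α ε (a, b) (-v, u) / L ^ 2
  refine ⟨-v - round κ * a, u - round κ * b, by linear_combination huv, ?_⟩
  have hinner : innerEps α ε (a, b) ((-v - round κ * a : ℤ), (u - round κ * b : ℤ))
      = (κ - round κ) * L ^ 2 := by
    rw [sub_mul, div_mul_cancel₀ _ (by positivity), normEps_sq]
    simp only [innerEps]
    push_cast
    ring
  have hdet : det ((a : ℝ), (b : ℝ)) ((-v - round κ * a : ℤ), (u - round κ * b : ℤ)) = 1 := by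
    simp only [det]
    push_cast
    linear_combination huv'
  have hlagrange := innerEps_sq_add_sq_mul_det_sq (α := α) (ε := ε) ((a : ℝ), (b : ℝ))
    ((-v - round κ * a : ℤ), (u - round κ * b : ℤ))
  rw [hinner, hdet] at hlagrange
  have hround : (κ - round κ) ^ 2 ≤ 1 / 4 := by
    have := abs_sub_round κ
    nlinarith [sq_abs (κ - round κ), abs_nonneg (κ - round κ)]
  set W := normEps α ε ((-v - round κ * a : ℤ), (u - round κ * b : ℤ))
  have hWL : W * L ≤ L ^ 2 / 2 + ε := by
    refine le_of_pow_le_pow_left₀ two_ne_zero (by positivity) ?_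
    nlinarith [mul_le_mul_of_nonneg_right hround (by positivity : (0 : ℝ) ≤ L ^ 4)]
  calc W ≤ (L ^ 2 / 2 + ε) / L := (le_div_iff₀ hL).2 hWL
    _ = L / 2 + ε / L := by field_simp

lemma diamEps_le_of_isCoprime (hε : 0 < ε) {a b : ℤ} (hab : IsCoprime a b) :
    diamEps α ε ≤ normEps α ε (a, b) + ε / normEps α ε (a, b) := by
  obtain ⟨c, d, hdet, hcd⟩ := exists_det_eq_one_normEps_le (α := α) hε hab
  have := div_nonneg hε.le (normEps_nonneg (α := α) (ε := ε) ((a : ℝ), (b : ℝ)))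
  refine diamEps_le fun x => (latticeDist_le_of_det_eq_one hdet x).trans ?_
  linarith [normEps_nonneg (α := α) (ε := ε) ((a : ℝ), (b : ℝ))]

end Lattice

section Diophantine

variable {α ν : ℝ}

lemma abs_mul_sub_eq {q : ℝ} (hq : 0 < q) (α p : ℝ) : |α * q - p| = |α - p / q| * q := by
  calc |α * q - p| = |(α - p / q) * q| := by congr 1; field_simp
    _ = |α - p / q| * q := by rw [abs_mul, abs_of_pos hq]

def approxSet (α ν : ℝ) : Set (ℤ × ℤ) :=
  {pq : ℤ × ℤ | 1 ≤ pq.2 ∧ |α - (pq.1 : ℝ) / (pq.2 : ℝ)| < 1 / (pq.2 : ℝ) ^ ν}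

lemma approxSet_antitone (α : ℝ) : Antitone (approxSet α) := by
  rintro ν ν' hνν' ⟨p, q⟩ ⟨hq, hpq⟩
  have hq1 : (1 : ℝ) ≤ q := by exact_mod_cast hq
  refine ⟨hq, hpq.trans_le ?_⟩
  gcongr

lemma ofReal_le_irrExp (h : (approxSet α ν).Infinite) : ENNReal.ofReal ν ≤ irrExp α :=
  le_sSup ⟨ν, rfl, h⟩

lemma approxSet_finite_of_irrExp_lt (h : irrExp α < ENNReal.ofReal ν) : (approxSet α ν).Finite :=
  Set.not_infinite.1 fun hinf => (ofReal_le_irrExp hinf).not_gt h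

lemma approxSet_infinite_of_lt_irrExp (h : ENNReal.ofReal ν < irrExp α) :
    (approxSet α ν).Infinite := by
  obtain ⟨_, ⟨ν', rfl, hinf⟩, hlt⟩ := lt_sSup_iff.1 h
  exact hinf.mono (approxSet_antitone α (ENNReal.ofReal_lt_ofReal_iff'.1 hlt).1.le)

lemma two_le_irrExp (hα : Irrational α) : 2 ≤ irrExp α := by
  have hinf : (approxSet α 2).Infinite := by
    have hinj : Set.InjOn (fun r : ℚ => ((r.num, (r.den : ℤ)) : ℤ × ℤ)) Set.univ :=
      fun r _ s _ h => Rat.ext (congrArg Prod.fst h) (by simpa using congrArg Prod.snd h)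
    refine ((Real.infinite_rat_abs_sub_lt_one_div_den_sq_of_irrational hα).image
      (hinj.mono (Set.subset_univ _))).mono ?_
    rintro _ ⟨r, hr, rfl⟩
    refine ⟨by simpa using Nat.one_le_iff_ne_zero.2 r.den_nz, ?_⟩
    simpa [Rat.cast_def] using hr
  simpa using ofReal_le_irrExp hinf

lemma exists_mem_approxSet_le_snd (hν : 0 ≤ ν) (h : (approxSet α ν).Infinite) (N : ℤ) :
    ∃ pq ∈ approxSet α ν, N ≤ pq.2 := by
  by_contra! hN
  set M := ⌈(|α| + 1) * N⌉
  refine h ((Set.finite_Icc ((-M, 1) : ℤ × ℤ) (M, N)).subset ?_)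
  rintro ⟨p, q⟩ hpq
  have hqN := hN _ hpq
  obtain ⟨hq, happ⟩ := hpq
  have hq1 : (1 : ℝ) ≤ q := by exact_mod_cast hq
  have hqN' : (q : ℝ) ≤ N := by exact_mod_cast hqN.le
  have happ' : |α * q - p| < q := by
    have h1 : |α - p / q| < 1 := happ.trans_le (div_le_one_of_le₀ (Real.one_le_rpow hq1 hν)
      (by positivity))
    calc |α * q - p| = |α - p / q| * q := abs_mul_sub_eq (by linarith) α p
      _ < 1 * q := by gcongr
      _ = q := one_mul _
  have hp : |(p : ℝ)| ≤ (|α| + 1) * N := by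
    calc |(p : ℝ)| ≤ |α * q| + |α * q - p| := by
          have := abs_sub_abs_le_abs_sub (p : ℝ) (α * q)
          rw [abs_sub_comm] at this
          linarith
      _ ≤ |α| * q + q := by rw [abs_mul, abs_of_pos (by linarith : (0 : ℝ) < q)]; linarith
      _ ≤ (|α| + 1) * N := by nlinarith [abs_nonneg α]
  have hpM : |p| ≤ M := by
    have : ((|p| : ℤ) : ℝ) ≤ M := by rw [Int.cast_abs]; exact hp.trans (Int.le_ceil _)
    exact_mod_cast this
  exact ⟨⟨(abs_le.1 hpM).1, hq⟩, ⟨(abs_le.1 hpM).2, hqN.le⟩⟩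

def IsDiophantine (α ν c : ℝ) : Prop :=
  ∀ p q : ℤ, 0 < q → c * (q : ℝ) ^ (1 - ν) ≤ |α * q - p|

lemma exists_isDiophantine (hα : Irrational α) (h : (approxSet α ν).Finite) :
    ∃ c, 0 < c ∧ c ≤ 1 ∧ IsDiophantine α ν c := by
  set g : ℤ × ℤ → ℝ := fun pq => |α * pq.2 - pq.1| / (pq.2 : ℝ) ^ (1 - ν)
  obtain ⟨c, hcT, hc⟩ := Set.exists_min_image (insert 1 (g '' approxSet α ν)) id
    ((h.image g).insert 1) (Set.insert_nonempty _ _)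
  have hc1 : c ≤ 1 := hc 1 (Set.mem_insert _ _)
  refine ⟨c, ?_, hc1, fun p q hq => ?_⟩
  · rcases hcT with rfl | ⟨⟨p, q⟩, ⟨hq, -⟩, rfl⟩
    · exact one_pos
    · have hq0 : (0 : ℝ) < q := by exact_mod_cast hq
      refine div_pos (abs_pos.2 fun h0 => hα ⟨p / q, ?_⟩) (Real.rpow_pos_of_pos hq0 _)
      push_cast
      field_simp
      linarith
  have hq0 : (0 : ℝ) < q := by exact_mod_cast hq
  by_cases hmem : (p, q) ∈ approxSet α ν
  · exact (le_div_iff₀ (Real.rpow_pos_of_pos hq0 _)).1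
      (hc _ (Set.mem_insert_of_mem _ ⟨(p, q), hmem, rfl⟩))
  · have hfar : 1 / (q : ℝ) ^ ν ≤ |α - p / q| := not_lt.1 fun hlt => hmem ⟨hq, hlt⟩
    calc c * (q : ℝ) ^ (1 - ν) ≤ 1 * (q : ℝ) ^ (1 - ν) := by gcongr
      _ = 1 / (q : ℝ) ^ ν * q := by rw [one_mul, Real.rpow_sub hq0, Real.rpow_one]; ring
      _ ≤ |α - p / q| * q := by gcongr
      _ = |α * q - p| := (abs_mul_sub_eq hq0 α p).symm

end Diophantine

section Bounds

variable {α ε ν c : ℝ}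

lemma diamEps_pos (hε : 0 < ε) : 0 < diamEps α ε := by
  have hv : (((0 : ℤ) : ℝ), ((1 : ℤ) : ℝ)) ≠ 0 := by simp [Prod.ext_iff]
  exact (div_pos hε (mul_pos two_pos (normEps_pos hε hv))).trans_le (div_le_diamEps hε hv)

/-- Dirichlet's theorem with denominators up to `⌈1 / √ε⌉`. -/
lemma exists_isCoprime_normEps_le (hε : 0 < ε) (hε1 : ε ≤ 1) :
    ∃ a b : ℤ, IsCoprime a b ∧ normEps α ε (a, b) ≤ 6 * (1 + α ^ 2) * √ε := by
  have hsqrt : 0 < √ε := Real.sqrt_pos.2 hε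
  set n := ⌈(√ε)⁻¹⌉₊
  have hn : (√ε)⁻¹ ≤ n := Nat.le_ceil _
  obtain ⟨r, hr, hrn⟩ := Real.exists_rat_abs_sub_le_and_den_le α
    (Nat.ceil_pos.2 (inv_pos.2 hsqrt))
  refine ⟨r.den, r.num, r.isCoprime_num_den.symm, ?_⟩
  have hden : (0 : ℝ) < r.den := by exact_mod_cast r.den_pos
  have hfst : ε * |((r.den : ℤ) : ℝ)| ≤ 2 * √ε := by
    have hrn' : (r.den : ℝ) < (√ε)⁻¹ + 1 := (Nat.cast_le.2 hrn).trans_lt (Nat.ceil_lt_add_one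
      (inv_pos.2 hsqrt).le)
    have hεs : ε ≤ √ε := Real.le_sqrt_of_sq_le (by nlinarith)
    have : ε * (√ε)⁻¹ = √ε :=
      (mul_inv_eq_iff_eq_mul₀ hsqrt.ne').2 (Real.mul_self_sqrt hε.le).symm
    push_cast
    rw [abs_of_pos hden]
    nlinarith
  have hsnd : |α * ((r.den : ℤ) : ℝ) - (r.num : ℝ)| ≤ √ε := by
    have h1 : |α * ((r.den : ℤ) : ℝ) - (r.num : ℝ)| = |α - r| * r.den := by
      rw [Int.cast_natCast, abs_mul_sub_eq hden, Rat.cast_def]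
    rw [h1]
    calc |α - r| * r.den ≤ 1 / ((n + 1) * r.den) * r.den := by gcongr
      _ = 1 / (n + 1) := by field_simp
      _ ≤ √ε := by
        rw [div_le_iff₀ (by positivity)]
        have := (inv_le_iff_one_le_mul₀' hsqrt).1 hn
        nlinarith
  calc normEps α ε (((r.den : ℤ) : ℝ), (r.num : ℝ))
      ≤ 2 * (1 + α ^ 2) * (ε * |((r.den : ℤ) : ℝ)| + |α * ((r.den : ℤ) : ℝ) - (r.num : ℝ)|) :=
        normEps_le_mul_add hε.le hε1 _
    _ ≤ 2 * (1 + α ^ 2) * (2 * √ε + √ε) := by gcongr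
    _ = 6 * (1 + α ^ 2) * √ε := by ring

/-- Either `ε |m|` or, via the Diophantine bound, `|α m - n|` is at least `ε ^ (1 - ν⁻¹)`,
according as `|m|` is above or below `ε ^ (-ν⁻¹)`. -/
lemma le_normEps_of_isDiophantine (hν : 1 ≤ ν) (hc0 : 0 ≤ c) (hc1 : c ≤ 1)
    (hD : IsDiophantine α ν c) (hε : 0 < ε) (hε1 : ε ≤ 1) {m n : ℤ} (hmn : ((m : ℝ), (n : ℝ)) ≠ 0) :
    c * ε ^ (1 - ν⁻¹) ≤ 3 * (1 + α ^ 2) * normEps α ε (m, n) := by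
  wlog hm : 0 ≤ m generalizing m n
  · have := this (m := -m) (n := -n) (by simpa [Prod.ext_iff] using hmn) (by omega)
    have e : ((((-m : ℤ) : ℝ), ((-n : ℤ) : ℝ)) : ℝ × ℝ) = -((m : ℝ), (n : ℝ)) := by simp
    rwa [e, normEps_neg] at this
  have hν0 : 0 < ν := by linarith
  have hθ : ε ^ (1 - ν⁻¹) ≤ 1 := Real.rpow_le_one hε.le hε1 (by
    have := inv_le_one_of_one_le₀ hν; linarith)
  refine le_trans ?_ (mul_add_le_normEps hε.le hε1 _)
  dsimp only
  have hm' : (0 : ℝ) ≤ m := by exact_mod_cast hm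
  rw [abs_of_nonneg hm']
  rcases le_or_gt (ε ^ (-ν⁻¹)) m with hbig | hsmall
  · have : ε ^ (1 - ν⁻¹) ≤ ε * m := by
      rw [sub_eq_add_neg, Real.rpow_add hε, Real.rpow_one]
      gcongr
    nlinarith [abs_nonneg (α * m - n), Real.rpow_nonneg hε.le (1 - ν⁻¹)]
  rcases hm.eq_or_lt with rfl | hm0
  · have hn : n ≠ 0 := fun hn => hmn (by simp [hn])
    have h1 : (1 : ℝ) ≤ |(n : ℝ)| := by exact_mod_cast Int.one_le_abs hn
    simp only [Int.cast_zero, mul_zero, zero_sub, zero_add, abs_neg]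
    nlinarith [mul_le_mul_of_nonneg_left hθ hc0]
  · have hpow : ε ^ (1 - ν⁻¹) ≤ (m : ℝ) ^ (1 - ν) := by
      calc ε ^ (1 - ν⁻¹) = (ε ^ (-ν⁻¹)) ^ (1 - ν) := by
            rw [← Real.rpow_mul hε.le]; congr 1; field_simp; ring
        _ ≤ (m : ℝ) ^ (1 - ν) :=
          Real.rpow_le_rpow_of_nonpos (by exact_mod_cast hm0) hsmall.le (by linarith)
    nlinarith [hD n m hm0, mul_le_mul_of_nonneg_left hpow hc0, mul_nonneg hε.le hm']

lemma diamEps_le_of_isDiophantine (hν : 2 ≤ ν) (hc0 : 0 < c) (hc1 : c ≤ 1)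
    (hD : IsDiophantine α ν c) (hε : 0 < ε) (hε1 : ε ≤ 1) :
    diamEps α ε ≤ (6 * (1 + α ^ 2) + 3 * (1 + α ^ 2) / c) * ε ^ ν⁻¹ := by
  obtain ⟨a, b, hab, hshort⟩ := exists_isCoprime_normEps_le (α := α) hε hε1
  have hv := intCast_prod_ne_zero_of_isCoprime hab
  set L := normEps α ε (a, b)
  have hL : 0 < L := normEps_pos hε hv
  have hlong := le_normEps_of_isDiophantine (α := α) (by linarith) hc0.le hc1 hD hε hε1 hv
  have hsqrt : √ε ≤ ε ^ ν⁻¹ := by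
    rw [Real.sqrt_eq_rpow]
    exact Real.rpow_le_rpow_of_exponent_ge hε hε1 (by rw [one_div]; exact inv_anti₀ two_pos hν)
  have hsplit : ε = ε ^ (1 - ν⁻¹) * ε ^ ν⁻¹ := by
    rw [← Real.rpow_add hε, sub_add_cancel, Real.rpow_one]
  have hεL : ε / L ≤ 3 * (1 + α ^ 2) / c * ε ^ ν⁻¹ := by
    rw [div_le_iff₀ hL]
    calc ε = ε ^ (1 - ν⁻¹) * ε ^ ν⁻¹ := hsplit
      _ ≤ 3 * (1 + α ^ 2) * L / c * ε ^ ν⁻¹ := by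
        gcongr
        rw [le_div_iff₀ hc0, mul_comm]
        exact hlong
      _ = _ := by ring
  calc diamEps α ε ≤ L + ε / L := diamEps_le_of_isCoprime hε hab
    _ ≤ 6 * (1 + α ^ 2) * ε ^ ν⁻¹ + 3 * (1 + α ^ 2) / c * ε ^ ν⁻¹ := by
      gcongr
      exact hshort.trans (by gcongr)
    _ = _ := by ring

lemma rpow_inv_le_diamEps_of_mem_approxSet (hν : 0 < ν) {p q : ℤ} (h : (p, q) ∈ approxSet α ν) :
    (8 * (1 + α ^ 2))⁻¹ * ((q : ℝ) ^ (-ν)) ^ ν⁻¹ ≤ diamEps α ((q : ℝ) ^ (-ν)) := by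
  obtain ⟨hq, happ⟩ := h
  have hq0 : (0 : ℝ) < q := by exact_mod_cast hq
  have hq1 : (1 : ℝ) ≤ q := by exact_mod_cast hq
  set ε := (q : ℝ) ^ (-ν)
  have hε : 0 < ε := Real.rpow_pos_of_pos hq0 _
  have hε1 : ε ≤ 1 := Real.rpow_le_one_of_one_le_of_nonpos hq1 (by linarith)
  have hεq : ε * q = (q : ℝ) ^ (1 - ν) := by
    rw [sub_eq_neg_add, Real.rpow_add hq0, Real.rpow_one]
  have happ' : |α * q - p| ≤ (q : ℝ) ^ (1 - ν) := by
    rw [abs_mul_sub_eq hq0, Real.rpow_sub hq0, Real.rpow_one]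
    calc |α - p / q| * q ≤ 1 / (q : ℝ) ^ ν * q := by gcongr
      _ = q / (q : ℝ) ^ ν := by ring
  have hv : ((q : ℝ), (p : ℝ)) ≠ 0 := fun h0 => hq0.ne' (congrArg Prod.fst h0)
  have hN : normEps α ε (q, p) ≤ 4 * (1 + α ^ 2) * (q : ℝ) ^ (1 - ν) := by
    refine (normEps_le_mul_add hε.le hε1 _).trans ?_
    rw [abs_of_pos hq0, hεq]
    nlinarith [sq_nonneg α, Real.rpow_nonneg hq0.le (1 - ν)]
  refine le_trans ?_ (div_le_diamEps hε hv)
  have hεν : ε ^ ν⁻¹ = (q : ℝ)⁻¹ := by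
    rw [← Real.rpow_mul hq0.le, neg_mul, mul_inv_cancel₀ hν.ne', Real.rpow_neg_one]
  rw [hεν, le_div_iff₀ (mul_pos two_pos (normEps_pos hε hv))]
  calc (8 * (1 + α ^ 2))⁻¹ * (q : ℝ)⁻¹ * (2 * normEps α ε (q, p))
      ≤ (8 * (1 + α ^ 2))⁻¹ * (q : ℝ)⁻¹ * (2 * (4 * (1 + α ^ 2) * (q : ℝ) ^ (1 - ν))) := by
        gcongr
    _ = ε := by
      rw [← hεq]; field_simp; ring

lemma frequently_rpow_inv_le_diamEps (hν : 0 < ν) (h : (approxSet α ν).Infinite) :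
    ∃ᶠ ε in 𝓝[>] 0, (8 * (1 + α ^ 2))⁻¹ * ε ^ ν⁻¹ ≤ diamEps α ε := by
  have hfreq : ∃ᶠ q : ℤ in atTop, ∃ p, (p, q) ∈ approxSet α ν :=
    frequently_atTop.2 fun N => by
      obtain ⟨⟨p, q⟩, hpq, hN⟩ := exists_mem_approxSet_le_snd hν.le h N
      exact ⟨q, hN, p, hpq⟩
  have hlim : Tendsto (fun q : ℤ => (q : ℝ) ^ (-ν)) atTop (𝓝[>] 0) :=
    tendsto_nhdsWithin_iff.2 ⟨(tendsto_rpow_neg_atTop hν).comp tendsto_intCast_atTop_atTop,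
      (eventually_gt_atTop 0).mono fun q hq => Real.rpow_pos_of_pos (by exact_mod_cast hq) _⟩
  exact hlim.frequently (hfreq.mono fun q ⟨p, hpq⟩ => rpow_inv_le_diamEps_of_mem_approxSet hν hpq)

end Bounds

section Exponent

variable {α : ℝ}

lemma lt_ofReal_inv_iff {μ : ℝ≥0∞} (hμ : μ ≠ 0) {s : ℝ} (hs : 0 < s) :
    μ < ENNReal.ofReal s⁻¹ ↔ s < (μ⁻¹).toReal := by
  rw [ENNReal.ofReal_inv_of_pos hs, ENNReal.lt_inv_iff_lt_inv,
    ENNReal.ofReal_lt_iff_lt_toReal hs.le (ENNReal.inv_ne_top.2 hμ)]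

lemma ofReal_inv_lt_iff {μ : ℝ≥0∞} (hμ : μ ≠ 0) {s : ℝ} (hs : 0 < s) :
    ENNReal.ofReal s⁻¹ < μ ↔ (μ⁻¹).toReal < s := by
  rw [ENNReal.ofReal_inv_of_pos hs, ENNReal.inv_lt_iff_inv_lt,
    ENNReal.lt_ofReal_iff_toReal_lt (ENNReal.inv_ne_top.2 hμ)]

lemma irrExp_ne_zero (hα : Irrational α) : irrExp α ≠ 0 :=
  (lt_of_lt_of_le two_pos (two_le_irrExp hα)).ne'

lemma toReal_inv_irrExp_le (hα : Irrational α) : ((irrExp α)⁻¹).toReal ≤ 2⁻¹ := by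
  have := ENNReal.toReal_mono (by simp) (ENNReal.inv_le_inv.2 (two_le_irrExp hα))
  simpa using this

lemma exists_eventually_diamEps_le (hα : Irrational α) {c : ℝ}
    (hc : c < ((irrExp α)⁻¹).toReal) :
    ∃ s > c, ∃ K > 0, ∀ᶠ ε in 𝓝[>] 0, 0 < diamEps α ε ∧ diamEps α ε ≤ K * ε ^ s := by
  have hsmall : ∀ᶠ ε in 𝓝[>] (0 : ℝ), 0 < ε ∧ ε ≤ 1 :=
    eventually_of_mem (Ioc_mem_nhdsGT one_pos) fun _ hε => hε
  rcases lt_or_ge c 0 with hc0 | hc0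
  · refine ⟨0, hc0, 1, one_pos, hsmall.mono fun ε ⟨hε, hε1⟩ => ⟨diamEps_pos hε, ?_⟩⟩
    simpa using diamEps_le_one hε.le hε1
  obtain ⟨s, hcs, hs⟩ := exists_between hc
  have hs0 : 0 < s := hc0.trans_lt hcs
  have hν : 2 ≤ s⁻¹ := by
    rw [le_inv_comm₀ two_pos hs0]
    exact (hs.trans_le (toReal_inv_irrExp_le hα)).le
  obtain ⟨c', hc'0, hc'1, hD⟩ := exists_isDiophantine hα
    (approxSet_finite_of_irrExp_lt ((lt_ofReal_inv_iff (irrExp_ne_zero hα) hs0).2 hs))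
  refine ⟨s, hcs, 6 * (1 + α ^ 2) + 3 * (1 + α ^ 2) / c', by positivity,
    hsmall.mono fun ε ⟨hε, hε1⟩ => ⟨diamEps_pos hε, ?_⟩⟩
  simpa using diamEps_le_of_isDiophantine hν hc'0 hc'1 hD hε hε1

lemma exists_frequently_le_diamEps (hα : Irrational α) {c : ℝ}
    (hc : ((irrExp α)⁻¹).toReal < c) :
    ∃ s < c, ∃ K > 0, ∃ᶠ ε in 𝓝[>] 0, K * ε ^ s ≤ diamEps α ε := by
  obtain ⟨s, hs, hsc⟩ := exists_between hc
  have hs0 : 0 < s := ENNReal.toReal_nonneg.trans_lt hs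
  refine ⟨s, hsc, (8 * (1 + α ^ 2))⁻¹, by positivity, ?_⟩
  simpa using frequently_rpow_inv_le_diamEps (inv_pos.2 hs0)
    (approxSet_infinite_of_lt_irrExp ((ofReal_inv_lt_iff (irrExp_ne_zero hα) hs0).2 hs))

end Exponent

end AdiabaticTorus

/-- For the adiabatic collapse `g_ε` of the linear flow of slope `α` (irrational) on
`T²`, `liminf_{ε→0⁺} ln diam(T², g_ε) / ln ε = 1/μ(α)`. -/
theorem stmt_14 (α : ℝ) (hα : Irrational α) :
    Filter.liminf (fun ε : ℝ => Real.log (diamEps α ε) / Real.log ε)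
        (nhdsWithin 0 (Set.Ioi 0)) = ((irrExp α)⁻¹).toReal :=
  AdiabaticTorus.liminf_log_div_log_eq
    (fun _ hc => AdiabaticTorus.exists_eventually_diamEps_le hα hc)
    (fun _ hc => AdiabaticTorus.exists_frequently_le_diamEps hα hc)
end
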